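/- arXiv:math/0308007 — 8 statements merged into one kernel-verified Lean document; each statement's English description precedes it below -/
import Mathlib

section
/- For each k ∈ ℕ, let q_k : ℕ_k → (0,1] with ∑_{i ∈ ℕ_k} q_{ik} = 1, where ℕ_k = {0,1,...,N_k} with N_k finite. Let V_k ⊆ ℕ_k be nonempty, set S_k = ∑_{i ∈ V_k} q_{ik} and W_k = 1 - S_k. Then the set Γ of points of [0,1] all of whose Q̃-representation digits i_k lie in V_k has Lebesgue measure zero if and only if ∑_{k=1}^∞ W_k = ∞. -/
open MeasureTheory Filter Finset Topology

/-- The coding map of the `Q̃`-representation: it sends a digit sequence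
`ω`, with `k`-th digit in `{0, 1, ..., N k}`, to the point of `[0,1]` given by
formula (5) of the paper: `x = ∑_k D_k(x) L_{k-1}(x)`, i.e. the unique point in
the intersection of the nested cylinder intervals `Δ_{ω₁...ω_k}`. -/
noncomputable def codingMap (N : ℕ → ℕ) (q : (k : ℕ) → Fin (N k + 1) → ℝ)
    (ω : (k : ℕ) → Fin (N k + 1)) : ℝ :=
  ∑' k : ℕ, (∑ j : Fin (N k + 1), if (j : ℕ) < (ω k : ℕ) then q k j else 0) *
    ∏ s ∈ Finset.range k, q s (ω s)

/-- `Γ_{Q̃(V)}`: the set of points of `[0,1]` admitting a `Q̃`-representation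
whose `k`-th digit lies in `V k` for every `k`. -/
noncomputable def QtSet (N : ℕ → ℕ) (q : (k : ℕ) → Fin (N k + 1) → ℝ)
    (V : (k : ℕ) → Finset (Fin (N k + 1))) : Set ℝ :=
  codingMap N q '' {ω | ∀ k, ω k ∈ V k}

section Aux

variable (N : ℕ → ℕ) (q : (k : ℕ) → Fin (N k + 1) → ℝ)

/-- Partial sum of column `k` below digit `i`. -/
noncomputable def Dsum (k : ℕ) (i : Fin (N k + 1)) : ℝ :=
  ∑ j : Fin (N k + 1), if (j : ℕ) < (i : ℕ) then q k j else 0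

/-- Length of the rank-`n` cylinder containing `ω`. -/
noncomputable def Lcyl (ω : (k : ℕ) → Fin (N k + 1)) (n : ℕ) : ℝ :=
  ∏ s ∈ Finset.range n, q s (ω s)

/-- Left endpoint of the rank-`n` cylinder containing `ω`. -/
noncomputable def Acyl (ω : (k : ℕ) → Fin (N k + 1)) (n : ℕ) : ℝ :=
  ∑ k ∈ Finset.range n, Dsum N q k (ω k) * Lcyl N q ω k

variable {N q}

lemma Dsum_filter (k : ℕ) (i : Fin (N k + 1)) :
    Dsum N q k i = ∑ j ∈ Finset.univ.filter (fun j : Fin (N k + 1) => (j : ℕ) < (i : ℕ)), q k j :=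
  (Finset.sum_filter _ _).symm

lemma Dsum_nonneg (hq : ∀ k i, 0 < q k i) (k : ℕ) (i : Fin (N k + 1)) :
    0 ≤ Dsum N q k i := by
  rw [Dsum_filter]
  exact Finset.sum_nonneg fun j _ => (hq k j).le

lemma q_le_one (hq : ∀ k i, 0 < q k i) (hsum : ∀ k, ∑ i, q k i = 1) (k : ℕ)
    (i : Fin (N k + 1)) : q k i ≤ 1 := by
  rw [← hsum k]
  exact Finset.single_le_sum (fun j _ => (hq k j).le) (Finset.mem_univ i)

lemma Dsum_add_le_one (hq : ∀ k i, 0 < q k i) (hsum : ∀ k, ∑ i, q k i = 1) (k : ℕ)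
    (i : Fin (N k + 1)) : Dsum N q k i + q k i ≤ 1 := by
  rw [Dsum_filter, add_comm, ← Finset.sum_insert (by simp)]
  rw [← hsum k]
  exact Finset.sum_le_sum_of_subset_of_nonneg (Finset.subset_univ _)
    (fun j _ _ => (hq k j).le)

lemma Dsum_add_le (hq : ∀ k i, 0 < q k i) (k : ℕ) {i i' : Fin (N k + 1)}
    (h : (i : ℕ) < (i' : ℕ)) : Dsum N q k i + q k i ≤ Dsum N q k i' := by
  rw [Dsum_filter, Dsum_filter, add_comm, ← Finset.sum_insert (by simp)]
  refine Finset.sum_le_sum_of_subset_of_nonneg ?_ (fun j _ _ => (hq k j).le)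
  intro j hj
  simp only [Finset.mem_insert, Finset.mem_filter, Finset.mem_univ, true_and] at hj ⊢
  rcases hj with rfl | hj
  · exact h
  · exact hj.trans h

lemma Lcyl_zero (ω : (k : ℕ) → Fin (N k + 1)) : Lcyl N q ω 0 = 1 := by simp [Lcyl]

lemma Lcyl_succ (ω : (k : ℕ) → Fin (N k + 1)) (n : ℕ) :
    Lcyl N q ω (n + 1) = Lcyl N q ω n * q n (ω n) := Finset.prod_range_succ _ _

lemma Lcyl_pos (hq : ∀ k i, 0 < q k i) (ω : (k : ℕ) → Fin (N k + 1)) (n : ℕ) :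
    0 < Lcyl N q ω n :=
  Finset.prod_pos fun s _ => hq s (ω s)

lemma Acyl_zero (ω : (k : ℕ) → Fin (N k + 1)) : Acyl N q ω 0 = 0 := by simp [Acyl]

lemma Acyl_succ (ω : (k : ℕ) → Fin (N k + 1)) (n : ℕ) :
    Acyl N q ω (n + 1) = Acyl N q ω n + Dsum N q n (ω n) * Lcyl N q ω n :=
  Finset.sum_range_succ _ _

lemma Acyl_mono (hq : ∀ k i, 0 < q k i) (ω : (k : ℕ) → Fin (N k + 1)) {m n : ℕ}
    (h : m ≤ n) : Acyl N q ω m ≤ Acyl N q ω n :=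
  Finset.sum_le_sum_of_subset_of_nonneg (Finset.range_subset_range.2 h)
    (fun k _ _ => mul_nonneg (Dsum_nonneg hq k (ω k)) (Lcyl_pos hq ω k).le)

lemma nested (hq : ∀ k i, 0 < q k i) (hsum : ∀ k, ∑ i, q k i = 1)
    (ω : (k : ℕ) → Fin (N k + 1)) {m n : ℕ} (h : m ≤ n) :
    Acyl N q ω n + Lcyl N q ω n ≤ Acyl N q ω m + Lcyl N q ω m := by
  induction n, h using Nat.le_induction with
  | base => exact le_rfl
  | succ n hmn ih =>
    refine le_trans ?_ ih
    rw [Acyl_succ, Lcyl_succ]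
    have hL := Lcyl_pos hq ω n
    have h1 := Dsum_add_le_one hq hsum n (ω n)
    nlinarith
variable (N q) in
lemma coding_eq_tsum (ω : (k : ℕ) → Fin (N k + 1)) :
    codingMap N q ω = ∑' k, Dsum N q k (ω k) * Lcyl N q ω k := rfl

lemma Lcyl_congr {ω ω' : (k : ℕ) → Fin (N k + 1)} {n : ℕ}
    (h : ∀ s < n, ω s = ω' s) : Lcyl N q ω n = Lcyl N q ω' n :=
  Finset.prod_congr rfl fun s hs => by rw [h s (Finset.mem_range.1 hs)]

lemma Acyl_congr {ω ω' : (k : ℕ) → Fin (N k + 1)} {n : ℕ}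
    (h : ∀ s < n, ω s = ω' s) : Acyl N q ω n = Acyl N q ω' n := by
  refine Finset.sum_congr rfl fun k hk => ?_
  have hk' := Finset.mem_range.1 hk
  rw [h k hk', Lcyl_congr (fun s hs => h s (hs.trans hk'))]

lemma Acyl_le_one (hq : ∀ k i, 0 < q k i) (hsum : ∀ k, ∑ i, q k i = 1)
    (ω : (k : ℕ) → Fin (N k + 1)) (n : ℕ) : Acyl N q ω n ≤ 1 := by
  have h := nested hq hsum ω (Nat.zero_le n)
  have := Lcyl_pos hq ω n
  rw [Acyl_zero, Lcyl_zero] at h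
  linarith

lemma summable_coding (hq : ∀ k i, 0 < q k i) (hsum : ∀ k, ∑ i, q k i = 1)
    (ω : (k : ℕ) → Fin (N k + 1)) :
    Summable (fun k => Dsum N q k (ω k) * Lcyl N q ω k) := by
  exact summable_of_sum_range_le (c := 1)
    (fun k => mul_nonneg (Dsum_nonneg hq k (ω k)) (Lcyl_pos hq ω k).le)
    (fun n => Acyl_le_one hq hsum ω n)

lemma tendsto_Acyl (hq : ∀ k i, 0 < q k i) (hsum : ∀ k, ∑ i, q k i = 1)
    (ω : (k : ℕ) → Fin (N k + 1)) :
    Tendsto (Acyl N q ω) atTop (𝓝 (codingMap N q ω)) :=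
  (summable_coding hq hsum ω).hasSum.tendsto_sum_nat

lemma coding_mem (hq : ∀ k i, 0 < q k i) (hsum : ∀ k, ∑ i, q k i = 1)
    (ω : (k : ℕ) → Fin (N k + 1)) (n : ℕ) :
    Acyl N q ω n ≤ codingMap N q ω ∧
      codingMap N q ω ≤ Acyl N q ω n + Lcyl N q ω n := by
  constructor
  · refine ge_of_tendsto (tendsto_Acyl hq hsum ω) ?_
    filter_upwards [eventually_ge_atTop n] with m hm
    exact Acyl_mono hq ω hm
  · refine le_of_tendsto (tendsto_Acyl hq hsum ω) ?_
    filter_upwards [eventually_ge_atTop n] with m hm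
    have h1 := nested hq hsum ω hm
    have h2 := (Lcyl_pos hq ω m).le
    linarith

lemma tendsto_Lcyl (hq : ∀ k i, 0 < q k i) (hsum : ∀ k, ∑ i, q k i = 1)
    (hmax : Tendsto (fun n => ∏ k ∈ Finset.range n, ⨆ i, q k i) atTop (nhds 0))
    (ω : (k : ℕ) → Fin (N k + 1)) :
    Tendsto (Lcyl N q ω) atTop (𝓝 0) := by
  refine squeeze_zero (fun n => (Lcyl_pos hq ω n).le) (fun n => ?_) hmax
  refine Finset.prod_le_prod (fun s _ => (hq s (ω s)).le) (fun s _ => ?_)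
  exact le_ciSup (Set.Finite.bddAbove (Set.finite_range _)) (ω s)
variable (N q) in
/-- Extend a finite digit tuple to a full digit sequence (padding with `0`). -/
def extTup (n : ℕ) (t : (s : Fin n) → Fin (N s + 1)) : (k : ℕ) → Fin (N k + 1) :=
  fun k => if h : k < n then t ⟨k, h⟩ else ⟨0, Nat.succ_pos _⟩

lemma extTup_lt {n : ℕ} {t : (s : Fin n) → Fin (N s + 1)} {k : ℕ} (h : k < n) :
    extTup N n t k = t ⟨k, h⟩ := dif_pos h

/-- Separation: if `ω` and `ω'` agree below `k` and the `k`-th digit of `ω` is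
smaller, then the rank-`n` cylinder of `ω` lies entirely to the left. -/
lemma separated (hq : ∀ k i, 0 < q k i) (hsum : ∀ k, ∑ i, q k i = 1)
    {ω ω' : (s : ℕ) → Fin (N s + 1)} {k : ℕ}
    (hagree : ∀ s < k, ω s = ω' s) (hlt : (ω k : ℕ) < (ω' k : ℕ))
    {n : ℕ} (hk : k < n) :
    Acyl N q ω n + Lcyl N q ω n ≤ Acyl N q ω' n := by
  have h1 : Acyl N q ω n + Lcyl N q ω n ≤ Acyl N q ω (k + 1) + Lcyl N q ω (k + 1) :=
    nested hq hsum ω hk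
  have hL : Lcyl N q ω k = Lcyl N q ω' k := Lcyl_congr hagree
  have hA : Acyl N q ω k = Acyl N q ω' k := Acyl_congr hagree
  have h2 : Acyl N q ω (k + 1) + Lcyl N q ω (k + 1) ≤ Acyl N q ω' (k + 1) := by
    rw [Acyl_succ, Lcyl_succ, Acyl_succ, hA, hL]
    have hLpos := Lcyl_pos hq ω' k
    have hD := Dsum_add_le hq k hlt
    rw [← hL]
    nlinarith [Lcyl_pos hq ω k]
  have h3 : Acyl N q ω' (k + 1) ≤ Acyl N q ω' n := Acyl_mono hq ω' hk
  linarith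

/-- The greedy point/length recursion for the digit expansion of `x`. -/
noncomputable def chooseDigit (x a L : ℝ) (k : ℕ) : Fin (N k + 1) :=
  if h : (Finset.univ.filter (fun j : Fin (N k + 1) => a + L * Dsum N q k j ≤ x)).Nonempty
  then (Finset.univ.filter (fun j : Fin (N k + 1) => a + L * Dsum N q k j ≤ x)).max' h
  else ⟨0, Nat.succ_pos _⟩

noncomputable def gPt (x : ℝ) : ℕ → ℝ × ℝ
  | 0 => (0, 1)
  | (k+1) =>
    let p := gPt x k
    let d := chooseDigit (N := N) (q := q) x p.1 p.2 k
    (p.1 + Dsum N q k d * p.2, p.2 * q k d)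

noncomputable def gDigit (x : ℝ) (k : ℕ) : Fin (N k + 1) :=
  chooseDigit (N := N) (q := q) x (gPt (N := N) (q := q) x k).1 (gPt (N := N) (q := q) x k).2 k

lemma gPt_eq (x : ℝ) (k : ℕ) :
    gPt (N := N) (q := q) x k =
      (Acyl N q (gDigit (N := N) (q := q) x) k, Lcyl N q (gDigit (N := N) (q := q) x) k) := by
  induction k with
  | zero => simp [gPt, Acyl_zero, Lcyl_zero]
  | succ k ih =>
    show (let p := gPt (N := N) (q := q) x k;
      let d := chooseDigit (N := N) (q := q) x p.1 p.2 k;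
      ((p.1 + Dsum N q k d * p.2, p.2 * q k d) : ℝ × ℝ)) = _
    rw [Acyl_succ, Lcyl_succ]
    conv_rhs => rw [gDigit, ih]
    simp only [ih]

/-- If `x` lies in the (half-open) rank-`n` cylinder of `ω'`, the greedy digits of `x`
agree with `ω'` up to rank `n`. -/
lemma gDigit_agrees (hq : ∀ k i, 0 < q k i) (hsum : ∀ k, ∑ i, q k i = 1)
    {x : ℝ} {n : ℕ} {ω' : (s : ℕ) → Fin (N s + 1)}
    (h1 : Acyl N q ω' n ≤ x) (h2 : x < Acyl N q ω' n + Lcyl N q ω' n) :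
    ∀ k < n, gDigit (N := N) (q := q) x k = ω' k := by
  intro k hk
  induction k using Nat.strong_induction_on with
  | _ k ih =>
  have hagree : ∀ s < k, gDigit (N := N) (q := q) x s = ω' s :=
    fun s hs => ih s hs (hs.trans hk)
  have hA : Acyl N q (gDigit (N := N) (q := q) x) k = Acyl N q ω' k := Acyl_congr hagree
  have hL : Lcyl N q (gDigit (N := N) (q := q) x) k = Lcyl N q ω' k := Lcyl_congr hagree
  have hgd : gDigit (N := N) (q := q) x k =
      chooseDigit (N := N) (q := q) x (Acyl N q ω' k) (Lcyl N q ω' k) k := by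
    rw [gDigit, gPt_eq, hA, hL]
  set S := Finset.univ.filter
    (fun j : Fin (N k + 1) => Acyl N q ω' k + Lcyl N q ω' k * Dsum N q k j ≤ x) with hS
  have hLpos := Lcyl_pos hq ω' k
  have hmemS : ω' k ∈ S := by
    rw [hS, Finset.mem_filter]
    refine ⟨Finset.mem_univ _, ?_⟩
    have : Acyl N q ω' (k + 1) ≤ x := le_trans (Acyl_mono hq ω' hk) h1
    rw [Acyl_succ] at this
    linarith [this]
  have hne : S.Nonempty := ⟨_, hmemS⟩
  have hub : ∀ j ∈ S, j ≤ ω' k := by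
    intro j hj
    by_contra hgt
    push_neg at hgt
    have hgt' : (ω' k : ℕ) < (j : ℕ) := hgt
    have hD := Dsum_add_le hq k hgt'
    rw [hS, Finset.mem_filter] at hj
    have hnest : Acyl N q ω' n + Lcyl N q ω' n ≤ Acyl N q ω' (k+1) + Lcyl N q ω' (k+1) :=
      nested hq hsum ω' hk
    rw [Acyl_succ, Lcyl_succ] at hnest
    nlinarith [hj.2]
  rw [hgd, chooseDigit, dif_pos hne]
  exact le_antisymm (Finset.max'_le _ hne _ hub) (Finset.le_max' _ _ hmemS)
lemma sum_Lcyl (V : (k : ℕ) → Finset (Fin (N k + 1))) (n : ℕ) :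
    ∑ t ∈ Fintype.piFinset (fun s : Fin n => V (s : ℕ)),
        Lcyl N q (extTup N n t) n = ∏ k ∈ Finset.range n, ∑ i ∈ V k, q k i := by
  have h1 : ∀ t : (s : Fin n) → Fin (N (s : ℕ) + 1),
      Lcyl N q (extTup N n t) n = ∏ s : Fin n, q (s : ℕ) (t s) := by
    intro t
    rw [Lcyl, ← Fin.prod_univ_eq_prod_range]
    exact Finset.prod_congr rfl fun s _ => by rw [extTup_lt s.isLt]
  simp only [h1]
  rw [← Finset.prod_univ_sum]
  exact Fin.prod_univ_eq_prod_range (fun k => ∑ i ∈ V k, q k i) n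

lemma weierstrass (s : Finset ℕ) (f : ℕ → ℝ) (h0 : ∀ i ∈ s, 0 ≤ f i)
    (h1 : ∀ i ∈ s, f i ≤ 1) : 1 - ∑ i ∈ s, f i ≤ ∏ i ∈ s, (1 - f i) := by
  induction s using Finset.cons_induction with
  | empty => simp
  | cons a s ha ih =>
    rw [Finset.sum_cons, Finset.prod_cons]
    have ihs := ih (fun i hi => h0 i (Finset.mem_cons_of_mem hi))
      (fun i hi => h1 i (Finset.mem_cons_of_mem hi))
    have hfa0 := h0 a (Finset.mem_cons_self a s)
    have hfa1 := h1 a (Finset.mem_cons_self a s)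
    have hsum0 : 0 ≤ ∑ i ∈ s, f i :=
      Finset.sum_nonneg fun i hi => h0 i (Finset.mem_cons_of_mem hi)
    nlinarith

end Aux

/-- Lemma 2: under the standard assumptions on the matrix `Q̃`
(positive entries, columns summing to `1`, product of column maxima tending to `0`),
the set `Γ_{Q̃(V)}` has Lebesgue measure zero if and only if
`∑_{k=1}^∞ W_k = ∞`, where `W_k = 1 - S_k = 1 - ∑_{i ∈ V_k} q_{ik}`. -/
theorem qtSet_measure_zero_iff (N : ℕ → ℕ) (q : (k : ℕ) → Fin (N k + 1) → ℝ)
    (V : (k : ℕ) → Finset (Fin (N k + 1)))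
    (hq : ∀ k i, 0 < q k i) (hsum : ∀ k, ∑ i, q k i = 1)
    (hmax : Tendsto (fun n => ∏ k ∈ Finset.range n, ⨆ i, q k i) atTop (nhds 0))
    (hV : ∀ k, (V k).Nonempty) :
    volume (QtSet N q V) = 0 ↔
      Tendsto (fun n => ∑ k ∈ Finset.range n, (1 - ∑ i ∈ V k, q k i)) atTop atTop := by

  classical
  set S : ℕ → ℝ := fun k => ∑ i ∈ V k, q k i with hSdef
  have hS_pos : ∀ k, 0 < S k := fun k => Finset.sum_pos (fun i _ => hq k i) (hV k)
  have hS_le_one : ∀ k, S k ≤ 1 := by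
    intro k
    rw [hSdef, ← hsum k]
    exact Finset.sum_le_sum_of_subset_of_nonneg (Finset.subset_univ _)
      (fun i _ _ => (hq k i).le)
  set T : (n : ℕ) → Finset ((s : Fin n) → Fin (N (s : ℕ) + 1)) :=
    fun n => Fintype.piFinset (fun s : Fin n => V (s : ℕ)) with hTdef
  -- the rank-`n` coverings
  set Gam : ℕ → Set ℝ := fun n => ⋃ t ∈ T n,
    Set.Icc (Acyl N q (extTup N n t) n)
      (Acyl N q (extTup N n t) n + Lcyl N q (extTup N n t) n) with hGamdef
  set En : ℕ → Set ℝ := fun n => ⋃ t ∈ T n,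
    Set.Ico (Acyl N q (extTup N n t) n)
      (Acyl N q (extTup N n t) n + Lcyl N q (extTup N n t) n) with hEndef
  -- Γ is covered by each `Gam n`
  have hsub : ∀ n, QtSet N q V ⊆ Gam n := by
    rintro n x ⟨ω, hω, rfl⟩
    have hag : ∀ s < n, extTup N n (fun s : Fin n => ω (s : ℕ)) s = ω s :=
      fun s hs => extTup_lt hs
    have hA := Acyl_congr (N := N) (q := q) hag
    have hL := Lcyl_congr (N := N) (q := q) hag
    have hc := coding_mem hq hsum ω n
    refine Set.mem_biUnion (Fintype.mem_piFinset.2 fun s => hω (s : ℕ)) ?_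
    exact ⟨by rw [hA]; exact hc.1, by rw [hA, hL]; exact hc.2⟩
  -- upper bound for the covering measure
  have hGamvol : ∀ n, volume (Gam n) ≤ ENNReal.ofReal (∏ k ∈ Finset.range n, S k) := by
    intro n
    refine le_trans (measure_biUnion_finset_le _ _) ?_
    have : ∀ t ∈ T n, volume (Set.Icc (Acyl N q (extTup N n t) n)
        (Acyl N q (extTup N n t) n + Lcyl N q (extTup N n t) n)) =
        ENNReal.ofReal (Lcyl N q (extTup N n t) n) := by
      intro t _
      rw [Real.volume_Icc, add_sub_cancel_left]
    rw [Finset.sum_congr rfl this,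
      ← ENNReal.ofReal_sum_of_nonneg (fun t _ => (Lcyl_pos hq _ n).le),
      sum_Lcyl V n]
  constructor
  · -- hard direction
    intro h0
    by_contra hW
    set W : ℕ → ℝ := fun k => 1 - S k with hWdef
    have hWnn : ∀ k, 0 ≤ W k := fun k => by
      have := hS_le_one k; simp only [hWdef]; linarith
    have hWle : ∀ k, W k ≤ 1 := fun k => by
      have := hS_pos k; simp only [hWdef]; linarith
    have hmono : Monotone (fun n => ∑ k ∈ Finset.range n, W k) := by
      intro m n h
      exact Finset.sum_le_sum_of_subset_of_nonneg (Finset.range_subset_range.2 h)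
        (fun k _ _ => hWnn k)
    have hbdd : ∃ M, ∀ n, ∑ k ∈ Finset.range n, W k ≤ M := by
      by_contra hM
      push_neg at hM
      exact hW (tendsto_atTop_atTop_of_monotone hmono
        (fun b => (hM b).imp fun n hn => hn.le))
    obtain ⟨M, hM⟩ := hbdd
    have hsummable : Summable W := summable_of_sum_range_le hWnn hM
    have htend : Tendsto (fun n => ∑ k ∈ Finset.range n, W k) atTop (𝓝 (∑' k, W k)) :=
      hsummable.hasSum.tendsto_sum_nat
    obtain ⟨n0, hn0⟩ : ∃ n0, (∑' k, W k) - 2⁻¹ ≤ ∑ k ∈ Finset.range n0, W k :=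
      (htend.eventually (eventually_ge_nhds (by norm_num))).exists
    have htail : ∀ n, n0 ≤ n → ∑ k ∈ Finset.Ico n0 n, W k ≤ 2⁻¹ := by
      intro n hn
      rw [Finset.sum_Ico_eq_sub _ hn]
      have hle := Summable.sum_le_tsum (Finset.range n) (fun i _ => hWnn i) hsummable
      linarith
    have hprodS : ∀ n, n0 ≤ n →
        (∏ k ∈ Finset.range n0, S k) * 2⁻¹ ≤ ∏ k ∈ Finset.range n, S k := by
      intro n hn
      rw [← Finset.prod_range_mul_prod_Ico S hn]
      refine mul_le_mul_of_nonneg_left ?_ (Finset.prod_nonneg fun k _ => (hS_pos k).le)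
      have hwei := weierstrass (Finset.Ico n0 n) W (fun i _ => hWnn i) (fun i _ => hWle i)
      have heq : ∏ i ∈ Finset.Ico n0 n, (1 - W i) = ∏ i ∈ Finset.Ico n0 n, S i :=
        Finset.prod_congr rfl fun i _ => by simp only [hWdef]; ring
      rw [heq] at hwei
      have := htail n hn
      linarith
    have hdisj : ∀ n, (↑(T n) : Set ((s : Fin n) → Fin (N (s : ℕ) + 1))).PairwiseDisjoint
        (fun t => Set.Ico (Acyl N q (extTup N n t) n)
          (Acyl N q (extTup N n t) n + Lcyl N q (extTup N n t) n)) := by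
      intro n t _ t' _ hne
      have hex : ∃ m, ∃ h : m < n, t ⟨m, h⟩ ≠ t' ⟨m, h⟩ := by
        by_contra hc
        push_neg at hc
        exact hne (funext fun s => hc (s : ℕ) s.isLt)
      obtain ⟨hkn, hkne⟩ := Nat.find_spec hex
      have hagree : ∀ s < Nat.find hex, extTup N n t s = extTup N n t' s := by
        intro s hs
        have hsn : s < n := hs.trans hkn
        have hmin := Nat.find_min hex hs
        push_neg at hmin
        rw [extTup_lt hsn, extTup_lt hsn]
        exact hmin hsn
      have hnei : (extTup N n t (Nat.find hex) : ℕ) ≠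
          (extTup N n t' (Nat.find hex) : ℕ) := by
        rw [extTup_lt hkn, extTup_lt hkn]
        exact fun h => hkne (Fin.ext h)
      rcases hnei.lt_or_gt with hlt | hlt
      · have hsep := separated hq hsum hagree hlt hkn
        exact Set.disjoint_left.2 fun x hx hx' =>
          absurd (hx.2.trans_le (hsep.trans hx'.1)) (lt_irrefl x)
      · have hsep := separated hq hsum (fun s hs => (hagree s hs).symm) hlt hkn
        exact Set.disjoint_left.2 fun x hx hx' =>
          absurd (hx'.2.trans_le (hsep.trans hx.1)) (lt_irrefl x)
    have hEvol : ∀ n, volume (En n) = ENNReal.ofReal (∏ k ∈ Finset.range n, S k) := by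
      intro n
      simp only [hEndef]
      rw [measure_biUnion_finset (hdisj n) (fun t _ => measurableSet_Ico)]
      have h1 : ∀ t ∈ T n, volume (Set.Ico (Acyl N q (extTup N n t) n)
          (Acyl N q (extTup N n t) n + Lcyl N q (extTup N n t) n)) =
          ENNReal.ofReal (Lcyl N q (extTup N n t) n) := by
        intro t _
        rw [Real.volume_Ico, add_sub_cancel_left]
      rw [Finset.sum_congr rfl h1,
        ← ENNReal.ofReal_sum_of_nonneg (fun t _ => (Lcyl_pos hq _ n).le),
        sum_Lcyl V n]
    have hEmeas : ∀ n, MeasurableSet (En n) := by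
      intro n
      simp only [hEndef]
      exact (T n).measurableSet_biUnion fun t _ => measurableSet_Ico
    have hanti : Antitone En := by
      intro m n hmn
      simp only [hEndef]
      refine Set.iUnion₂_subset fun t ht => ?_
      set tm : (s : Fin m) → Fin (N (s : ℕ) + 1) :=
        fun s => t ⟨(s : ℕ), lt_of_lt_of_le s.isLt hmn⟩ with htmdef
      have htm : tm ∈ T m := Fintype.mem_piFinset.2 fun s =>
        Fintype.mem_piFinset.1 ht ⟨(s : ℕ), lt_of_lt_of_le s.isLt hmn⟩
      have hag : ∀ s < m, extTup N m tm s = extTup N n t s := by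
        intro s hs
        rw [extTup_lt hs, extTup_lt (lt_of_lt_of_le hs hmn)]
      refine Set.Subset.trans (Set.Ico_subset_Ico ?_ ?_)
        (Set.subset_biUnion_of_mem (u := fun t => Set.Ico (Acyl N q (extTup N m t) m)
          (Acyl N q (extTup N m t) m + Lcyl N q (extTup N m t) m)) htm)
      · rw [Acyl_congr (N := N) (q := q) hag]
        exact Acyl_mono hq _ hmn
      · rw [Acyl_congr (N := N) (q := q) hag, Lcyl_congr (N := N) (q := q) hag]
        have := nested hq hsum (extTup N n t) hmn
        linarith
    have hInter : (⋂ n, En n) ⊆ QtSet N q V := by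
      intro x hx
      rw [Set.mem_iInter] at hx
      have hkey : ∀ n, (∀ k < n, gDigit (N := N) (q := q) x k ∈ V k) ∧
          Acyl N q (gDigit (N := N) (q := q) x) n ≤ x ∧
          x < Acyl N q (gDigit (N := N) (q := q) x) n +
            Lcyl N q (gDigit (N := N) (q := q) x) n := by
        intro n
        have hxn := hx n
        simp only [hEndef] at hxn
        rw [Set.mem_iUnion₂] at hxn
        obtain ⟨t, ht, hxt⟩ := hxn
        have hag := gDigit_agrees hq hsum hxt.1 hxt.2
        have hA := Acyl_congr (N := N) (q := q) hag
        have hL := Lcyl_congr (N := N) (q := q) hag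
        refine ⟨?_, ?_, ?_⟩
        · intro k hk
          rw [hag k hk, extTup_lt hk]
          exact Fintype.mem_piFinset.1 ht ⟨k, hk⟩
        · rw [hA]; exact hxt.1
        · rw [hA, hL]; exact hxt.2
      have hb : ∀ n, |codingMap N q (gDigit (N := N) (q := q) x) - x| ≤
          Lcyl N q (gDigit (N := N) (q := q) x) n := by
        intro n
        have hc := coding_mem hq hsum (gDigit (N := N) (q := q) x) n
        have hk1 := (hkey n).2.1
        have hk2 := (hkey n).2.2
        rw [abs_le]
        exact ⟨by linarith [hc.1], by linarith [hc.2]⟩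
      have hz := ge_of_tendsto'
        (tendsto_Lcyl hq hsum hmax (gDigit (N := N) (q := q) x)) hb
      have hcx : codingMap N q (gDigit (N := N) (q := q) x) = x := by
        have h1 := abs_nonneg (codingMap N q (gDigit (N := N) (q := q) x) - x)
        have h2 := abs_eq_zero.1 (le_antisymm hz h1)
        linarith
      exact ⟨gDigit (N := N) (q := q) x,
        fun k => (hkey (k + 1)).1 k (Nat.lt_succ_self k), hcx⟩
    have hlimE := tendsto_measure_iInter_atTop
      (fun n => (hEmeas n).nullMeasurableSet) hanti
      ⟨0, by rw [hEvol 0]; exact ENNReal.ofReal_ne_top⟩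
    have hcpos : 0 < (∏ k ∈ Finset.range n0, S k) * 2⁻¹ :=
      mul_pos (Finset.prod_pos fun k _ => hS_pos k) (by norm_num)
    have hE : ENNReal.ofReal ((∏ k ∈ Finset.range n0, S k) * 2⁻¹) ≤
        volume (⋂ n, En n) := by
      refine ge_of_tendsto hlimE ?_
      filter_upwards [eventually_ge_atTop n0] with n hn
      show ENNReal.ofReal _ ≤ volume (En n)
      rw [hEvol n]
      exact ENNReal.ofReal_le_ofReal (hprodS n hn)
    have hfin := le_trans hE (measure_mono hInter)
    rw [h0] at hfin
    exact absurd hfin (not_le.2 (ENNReal.ofReal_pos.2 hcpos))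
  · -- easy direction: divergence of `∑ W_k` implies measure zero
    intro hW
    have hexp : ∀ n, (∏ k ∈ Finset.range n, S k) ≤
        Real.exp (-(∑ k ∈ Finset.range n, (1 - S k))) := by
      intro n
      have : ∀ k ∈ Finset.range n, S k ≤ Real.exp (-(1 - S k)) := by
        intro k _
        have := Real.add_one_le_exp (-(1 - S k))
        linarith
      refine le_trans (Finset.prod_le_prod (fun k _ => (hS_pos k).le) this) ?_
      rw [← Real.exp_sum, ← Finset.sum_neg_distrib]
    have hlim : Tendsto (fun n => ENNReal.ofReal
        (Real.exp (-(∑ k ∈ Finset.range n, (1 - S k))))) atTop (𝓝 0) := by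
      have h1 : Tendsto (fun n => -(∑ k ∈ Finset.range n, (1 - S k))) atTop atBot :=
        tendsto_neg_atTop_atBot.comp hW
      have h2 := Real.tendsto_exp_atBot.comp h1
      simpa using ENNReal.tendsto_ofReal h2
    have hle : ∀ n, volume (QtSet N q V) ≤ ENNReal.ofReal
        (Real.exp (-(∑ k ∈ Finset.range n, (1 - S k)))) := by
      intro n
      exact le_trans (measure_mono (hsub n)) (le_trans (hGamvol n)
        (ENNReal.ofReal_le_ofReal (hexp n)))
    exact nonpos_iff_eq_zero.1 (ge_of_tendsto' hlim hle)
end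

section
/- If V_k ≠ ℕ_k for infinitely many k (with each ℕ_k finite and each V_k nonempty), then the set Γ_{Q̃(V)} is nowhere dense in [0,1]. -/
open MeasureTheory Filter Finset Topology

section Aux

variable (N : ℕ → ℕ) (q : (k : ℕ) → Fin (N k + 1) → ℝ)

/-- The `k`-th "digit offset": sum of `q k j` over digits `j` smaller than `ω k`. -/
private noncomputable def qtA (ω : (k : ℕ) → Fin (N k + 1)) (k : ℕ) : ℝ :=
  ∑ j : Fin (N k + 1), if (j : ℕ) < (ω k : ℕ) then q k j else 0

/-- Length of the rank-`n` cylinder through `ω`. -/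
private noncomputable def qtL (ω : (k : ℕ) → Fin (N k + 1)) (n : ℕ) : ℝ :=
  ∏ s ∈ Finset.range n, q s (ω s)

/-- Left endpoint of the rank-`n` cylinder through `ω`. -/
private noncomputable def qtLeft (ω : (k : ℕ) → Fin (N k + 1)) (n : ℕ) : ℝ :=
  ∑ k ∈ Finset.range n, qtA N q ω k * qtL N q ω k

variable {N q}

private lemma qtL_pos (hq : ∀ k i, 0 < q k i) (ω : (k : ℕ) → Fin (N k + 1)) (n : ℕ) :
    0 < qtL N q ω n :=
  Finset.prod_pos fun s _ => hq s (ω s)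

private lemma qtA_nonneg (hq : ∀ k i, 0 < q k i) (ω : (k : ℕ) → Fin (N k + 1)) (k : ℕ) :
    0 ≤ qtA N q ω k := by
  refine Finset.sum_nonneg fun j _ => ?_
  split <;> [exact (hq k j).le; exact le_rfl]

private lemma qtA_eq (ω : (k : ℕ) → Fin (N k + 1)) (k : ℕ) :
    qtA N q ω k = ∑ j ∈ Finset.univ.filter (fun j : Fin (N k + 1) => (j : ℕ) < (ω k : ℕ)),
      q k j := by
  rw [Finset.sum_filter]; rfl

/-- Adding the current digit's `q` to the offset gives the sum over digits `≤`. -/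
private lemma qtA_add (hq : ∀ k i, 0 < q k i) (ω : (k : ℕ) → Fin (N k + 1)) (k : ℕ) :
    qtA N q ω k + q k (ω k)
      = ∑ j ∈ Finset.univ.filter (fun j : Fin (N k + 1) => (j : ℕ) ≤ (ω k : ℕ)), q k j := by
  rw [qtA_eq]
  have hins : Finset.univ.filter (fun j : Fin (N k + 1) => (j : ℕ) ≤ (ω k : ℕ))
      = insert (ω k) (Finset.univ.filter (fun j : Fin (N k + 1) => (j : ℕ) < (ω k : ℕ))) := by
    ext j
    simp only [Finset.mem_filter, Finset.mem_univ, true_and, Finset.mem_insert]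
    constructor
    · intro h
      rcases eq_or_lt_of_le h with h' | h'
      · exact Or.inl (Fin.ext h')
      · exact Or.inr h'
    · rintro (rfl | h)
      · exact le_rfl
      · exact h.le
  rw [hins, Finset.sum_insert (by simp), add_comm]

private lemma qtA_add_le_one (hq : ∀ k i, 0 < q k i) (hsum : ∀ k, ∑ i, q k i = 1)
    (ω : (k : ℕ) → Fin (N k + 1)) (k : ℕ) :
    qtA N q ω k + q k (ω k) ≤ 1 := by
  rw [qtA_add hq]
  calc _ ≤ ∑ j, q k j := Finset.sum_le_sum_of_subset_of_nonneg (Finset.subset_univ _)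
        (fun j _ _ => (hq k j).le)
    _ = 1 := hsum k

/-- If the digit `c` is smaller than `ω k`, then the `≤ c`-sum is at most the offset of `ω`. -/
private lemma qtA_compare (hq : ∀ k i, 0 < q k i) (ω τ : (k : ℕ) → Fin (N k + 1)) (k : ℕ)
    (h : (τ k : ℕ) < (ω k : ℕ)) :
    qtA N q τ k + q k (τ k) ≤ qtA N q ω k := by
  rw [qtA_add hq, qtA_eq]
  refine Finset.sum_le_sum_of_subset_of_nonneg ?_ (fun j _ _ => (hq k j).le)
  intro j hj
  simp only [Finset.mem_filter, Finset.mem_univ, true_and] at hj ⊢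
  omega

private lemma qtL_succ (ω : (k : ℕ) → Fin (N k + 1)) (n : ℕ) :
    qtL N q ω (n + 1) = qtL N q ω n * q n (ω n) :=
  Finset.prod_range_succ _ n

private lemma qtLeft_succ (ω : (k : ℕ) → Fin (N k + 1)) (n : ℕ) :
    qtLeft N q ω (n + 1) = qtLeft N q ω n + qtA N q ω n * qtL N q ω n :=
  Finset.sum_range_succ _ n

private lemma qtLeft_mono (hq : ∀ k i, 0 < q k i) (ω : (k : ℕ) → Fin (N k + 1)) :
    Monotone (qtLeft N q ω) := by
  refine monotone_nat_of_le_succ fun n => ?_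
  rw [qtLeft_succ]
  nlinarith [qtA_nonneg hq ω n, qtL_pos hq ω n]

private lemma qtRight_anti (hq : ∀ k i, 0 < q k i) (hsum : ∀ k, ∑ i, q k i = 1)
    (ω : (k : ℕ) → Fin (N k + 1)) :
    Antitone (fun n => qtLeft N q ω n + qtL N q ω n) := by
  refine antitone_nat_of_succ_le fun n => ?_
  rw [qtLeft_succ, qtL_succ]
  nlinarith [qtA_add_le_one hq hsum ω n, qtL_pos hq ω n]

private lemma qtLeft_le (hq : ∀ k i, 0 < q k i) (hsum : ∀ k, ∑ i, q k i = 1)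
    (ω : (k : ℕ) → Fin (N k + 1)) (n M : ℕ) :
    qtLeft N q ω M ≤ qtLeft N q ω n + qtL N q ω n := by
  rcases le_total M n with h | h
  · exact le_trans (qtLeft_mono hq ω h) (by linarith [qtL_pos hq ω n])
  · have h2 : qtLeft N q ω M + qtL N q ω M ≤ qtLeft N q ω n + qtL N q ω n :=
      qtRight_anti hq hsum ω h
    linarith [qtL_pos hq ω M]

private lemma qt_term_nonneg (hq : ∀ k i, 0 < q k i) (ω : (k : ℕ) → Fin (N k + 1)) (k : ℕ) :
    0 ≤ qtA N q ω k * qtL N q ω k :=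
  mul_nonneg (qtA_nonneg hq ω k) (qtL_pos hq ω k).le

private lemma codingMap_eq_tsum (ω : (k : ℕ) → Fin (N k + 1)) :
    codingMap N q ω = ∑' k, qtA N q ω k * qtL N q ω k := rfl

private lemma qt_summable (hq : ∀ k i, 0 < q k i) (hsum : ∀ k, ∑ i, q k i = 1)
    (ω : (k : ℕ) → Fin (N k + 1)) :
    Summable (fun k => qtA N q ω k * qtL N q ω k) := by
  refine summable_of_sum_range_le (c := 1) (qt_term_nonneg hq ω) fun M => ?_
  have := qtLeft_le hq hsum ω 0 M
  simpa [qtLeft, qtL] using this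

/-- The coding map lands in each cylinder determined by the digits of `ω`. -/
private lemma codingMap_mem (hq : ∀ k i, 0 < q k i) (hsum : ∀ k, ∑ i, q k i = 1)
    (ω : (k : ℕ) → Fin (N k + 1)) (n : ℕ) :
    qtLeft N q ω n ≤ codingMap N q ω ∧
      codingMap N q ω ≤ qtLeft N q ω n + qtL N q ω n := by
  rw [codingMap_eq_tsum]
  constructor
  · exact Summable.sum_le_tsum (Finset.range n) (fun k _ => qt_term_nonneg hq ω k)
      (qt_summable hq hsum ω)
  · exact Summable.tsum_le_of_sum_range_le (qt_summable hq hsum ω) (qtLeft_le hq hsum ω n)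

private lemma qtL_congr {ω τ : (k : ℕ) → Fin (N k + 1)} {n : ℕ}
    (h : ∀ s < n, ω s = τ s) : qtL N q ω n = qtL N q τ n :=
  Finset.prod_congr rfl fun s hs => by rw [h s (Finset.mem_range.mp hs)]

private lemma qtLeft_congr {ω τ : (k : ℕ) → Fin (N k + 1)} {n : ℕ}
    (h : ∀ s < n, ω s = τ s) : qtLeft N q ω n = qtLeft N q τ n := by
  refine Finset.sum_congr rfl fun k hk => ?_
  have hk' := Finset.mem_range.mp hk
  have h1 : qtA N q ω k = qtA N q τ k := by unfold qtA; rw [h k hk']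
  have h2 : qtL N q ω k = qtL N q τ k :=
    qtL_congr fun s hs => h s (hs.trans hk')
  rw [h1, h2]

/-- Exclusion lemma: if `τ` deviates from `σ` at some index `j < n` (and agrees before),
then `codingMap τ` is outside the open rank-`n` cylinder of `σ`. -/
private lemma qt_exclusion (hq : ∀ k i, 0 < q k i) (hsum : ∀ k, ∑ i, q k i = 1)
    (σ τ : (k : ℕ) → Fin (N k + 1)) (n j : ℕ) (hj : j < n) (hne : τ j ≠ σ j)
    (hagree : ∀ s < j, τ s = σ s) :
    codingMap N q τ ∉ Set.Ioo (qtLeft N q σ n) (qtLeft N q σ n + qtL N q σ n) := by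
  have hLeq : qtLeft N q τ j = qtLeft N q σ j := qtLeft_congr hagree
  have hLLeq : qtL N q τ j = qtL N q σ j := qtL_congr hagree
  have hvne : (τ j : ℕ) ≠ (σ j : ℕ) := fun h => hne (Fin.ext h)
  rcases lt_or_gt_of_ne hvne with hlt | hgt
  · -- τ j < σ j : codingMap τ ≤ left endpoint
    have h1 : codingMap N q τ ≤ qtLeft N q τ (j + 1) + qtL N q τ (j + 1) :=
      (codingMap_mem hq hsum τ (j + 1)).2
    have h2 : qtLeft N q τ (j + 1) + qtL N q τ (j + 1) ≤ qtLeft N q σ (j + 1) := by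
      rw [qtLeft_succ, qtL_succ, qtLeft_succ, hLeq, hLLeq]
      nlinarith [qtA_compare hq σ τ j hlt, qtL_pos hq σ j]
    have h3 : qtLeft N q σ (j + 1) ≤ qtLeft N q σ n := qtLeft_mono hq σ hj
    intro hmem
    linarith [hmem.1]
  · -- τ j > σ j : codingMap τ ≥ right endpoint
    have h1 : qtLeft N q τ (j + 1) ≤ codingMap N q τ :=
      (codingMap_mem hq hsum τ (j + 1)).1
    have h2 : qtLeft N q σ (j + 1) + qtL N q σ (j + 1) ≤ qtLeft N q τ (j + 1) := by
      rw [qtLeft_succ, qtL_succ, qtLeft_succ, hLeq, hLLeq]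
      nlinarith [qtA_compare hq τ σ j hgt, qtL_pos hq σ j]
    have h3 : qtLeft N q σ n + qtL N q σ n ≤ qtLeft N q σ (j + 1) + qtL N q σ (j + 1) :=
      qtRight_anti hq hsum σ hj
    intro hmem
    linarith [hmem.2]

end Aux

/-- If `V_k ≠ ℕ_k` for infinitely many `k`, then `Γ_{Q̃(V)}` is nowhere dense. -/
theorem qtSet_isNowhereDense (N : ℕ → ℕ) (q : (k : ℕ) → Fin (N k + 1) → ℝ)
    (V : (k : ℕ) → Finset (Fin (N k + 1)))
    (hq : ∀ k i, 0 < q k i) (hsum : ∀ k, ∑ i, q k i = 1)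
    (hmax : Tendsto (fun n => ∏ k ∈ Finset.range n, ⨆ i, q k i) atTop (nhds 0))
    (hV : ∀ k, (V k).Nonempty)
    (hinf : {k | V k ≠ Finset.univ}.Infinite) :
    IsNowhereDense (QtSet N q V) := by
  rw [IsNowhereDense, Set.eq_empty_iff_forall_notMem]
  intro x hx
  -- get a ball inside the closure
  obtain ⟨ε, hε, hball⟩ := Metric.isOpen_iff.mp isOpen_interior x hx
  have hball' : Metric.ball x ε ⊆ closure (QtSet N q V) :=
    hball.trans interior_subset
  -- a point of the set within ε/2 of x
  have hxc : x ∈ closure (QtSet N q V) := interior_subset hx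
  obtain ⟨y, hyS, hxy⟩ := Metric.mem_closure_iff.mp hxc (ε / 2) (by linarith)
  obtain ⟨ω, hω, rfl⟩ := hyS
  -- choose a rank n₀ after which cylinders are shorter than ε/2
  obtain ⟨n₀, hn₀⟩ := Filter.eventually_atTop.mp
    (hmax.eventually (gt_mem_nhds (by linarith : (0:ℝ) < ε / 2)))
  -- an index m ≥ n₀ with V m ≠ univ
  obtain ⟨m, hm⟩ := (hinf.diff (Set.finite_Iic n₀)).nonempty
  have hmV : V m ≠ Finset.univ := hm.1
  have hmn₀ : n₀ ≤ m := le_of_not_ge (by simpa using hm.2)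
  -- a missing digit d ∉ V m
  obtain ⟨d, hd⟩ : ∃ d, d ∉ V m := by
    by_contra h
    push_neg at h
    exact hmV (Finset.eq_univ_iff_forall.mpr h)
  -- the modified sequence and the forbidden open subcylinder
  set σ : (k : ℕ) → Fin (N k + 1) := Function.update ω m d with hσdef
  have hσm : σ m = d := by rw [hσdef]; simp
  have hσagree : ∀ s < m, σ s = ω s := fun s hs => by
    rw [hσdef, Function.update_of_ne (Nat.ne_of_lt hs)]
  set I : Set ℝ :=
    Set.Ioo (qtLeft N q σ (m + 1)) (qtLeft N q σ (m + 1) + qtL N q σ (m + 1)) with hIdef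
  -- I is nonempty
  have hIne : I.Nonempty := Set.nonempty_Ioo.mpr (by linarith [qtL_pos hq σ (m + 1)])
  -- cylinder length bound
  have hLsup : qtL N q ω m ≤ ∏ k ∈ Finset.range m, ⨆ i, q k i := by
    refine Finset.prod_le_prod (fun s _ => (hq s (ω s)).le) (fun s _ => ?_)
    exact le_ciSup (Set.finite_range (q s)).bddAbove (ω s)
  have hLsmall : qtL N q ω m < ε / 2 := lt_of_le_of_lt hLsup (hn₀ m hmn₀)
  -- I ⊆ ball x ε
  have hIball : I ⊆ Metric.ball x ε := by
    intro z hz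
    have hz1 := hz.1
    have hz2 := hz.2
    -- I sits inside the rank-m cylinder of σ, which equals that of ω
    have hLm : qtLeft N q σ m ≤ qtLeft N q σ (m + 1) :=
      qtLeft_mono hq σ (Nat.le_succ m)
    have hRm : qtLeft N q σ (m + 1) + qtL N q σ (m + 1)
        ≤ qtLeft N q σ m + qtL N q σ m :=
      qtRight_anti hq hsum σ (Nat.le_succ m)
    have he1 : qtLeft N q σ m = qtLeft N q ω m := qtLeft_congr hσagree
    have he2 : qtL N q σ m = qtL N q ω m := qtL_congr hσagree
    -- codingMap ω also sits in that cylinder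
    have hy := codingMap_mem hq hsum ω m
    have hzy : |z - codingMap N q ω| ≤ qtL N q ω m := by
      have ha : qtLeft N q ω m ≤ z := by rw [← he1]; linarith
      have hb : z ≤ qtLeft N q ω m + qtL N q ω m := by
        rw [← he1, ← he2]; linarith
      rw [abs_le]
      exact ⟨by linarith [hy.2], by linarith [hy.1]⟩
    have hdzx : dist z x ≤ dist z (codingMap N q ω) + dist (codingMap N q ω) x :=
      dist_triangle _ _ _
    rw [Metric.mem_ball]
    have h1 : dist z (codingMap N q ω) < ε / 2 := by
      rw [Real.dist_eq]; linarith
    have h2 : dist (codingMap N q ω) x < ε / 2 := by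
      rw [dist_comm]; exact hxy
    linarith
  -- I is disjoint from the set
  have hIdisj : ∀ w ∈ QtSet N q V, w ∉ I := by
    rintro w ⟨τ, hτ, rfl⟩ hw
    -- least index where τ differs from σ
    have hPm : τ m ≠ σ m := by
      rw [hσm]; intro h; exact hd (h ▸ hτ m)
    have hP : ∃ s, τ s ≠ σ s := ⟨m, hPm⟩
    classical
    set j := Nat.find hP with hjdef
    have hjne : τ j ≠ σ j := Nat.find_spec hP
    have hjle : j ≤ m := Nat.find_min' hP hPm
    have hjag : ∀ s < j, τ s = σ s := fun s hs => not_not.mp (Nat.find_min hP hs)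
    exact qt_exclusion hq hsum σ τ (m + 1) j (Nat.lt_succ_of_le hjle) hjne hjag hw
  -- contradiction: a point of I is in the closure but I misses the set
  obtain ⟨z₀, hz₀⟩ := hIne
  have hz₀c : z₀ ∈ closure (QtSet N q V) := hball' (hIball hz₀)
  obtain ⟨w, hwI, hwS⟩ := _root_.mem_closure_iff.mp hz₀c I isOpen_Ioo hz₀
  exact hIdisj w hwS hwI
end

section
/- Let μ = ⊗_{k=1}^∞ μ_k be the infinite product measure on Ω = ∏_k Ω_k with Ω_k finite and μ_k(i) = p_{ik}. If ∏_{k=1}^∞ max_i p_{ik} > 0, then μ is purely atomic: the set A_+ = {ω : μ({ω}) > 0} is countable and μ(A_+) = 1. -/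
open MeasureTheory Filter Finset Topology

/-!
Let `ω⋆` take a most likely value in every coordinate, so that `μ {ω⋆} = ∏ₖ maxᵢ pᵢₖ > 0`.
The ratio `μ {ω} / ∏_{k<m} p_k(ω_k)` only depends on the coordinates of `ω` beyond `m`, so the
points obtained from `ω⋆` by changing its first `m` coordinates in all possible ways have total
mass `μ {ω⋆} / ∏_{k<m} maxᵢ pᵢₖ`, which tends to `1` as `m → ∞`. Countability holds for the
atoms of any s-finite measure.
-/

namespace MeasureTheory

variable {α : Type*} [MeasurableSpace α] [MeasurableSingletonClass α]

theorem Measure.countable_setOf_measure_singleton_ne_zero (μ : Measure α) [SFinite μ] :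
    {x | μ {x} ≠ 0}.Countable := by
  simpa only [pos_iff_ne_zero] using Measure.countable_meas_pos_of_disjoint_iUnion (μ := μ)
    (measurableSet_singleton : ∀ x : α, MeasurableSet {x})
    fun _ _ hxy => Set.disjoint_singleton.mpr hxy

theorem sum_measure_singleton_le_measure_setOf_ne_zero (μ : Measure α) (s : Finset α) :
    ∑ x ∈ s, μ {x} ≤ μ {x | μ {x} ≠ 0} := by
  rw [← Finset.sum_filter_ne_zero, sum_measure_singleton]
  exact measure_mono fun x hx => (Finset.mem_filter.mp hx).2

end MeasureTheory

theorem Finset.prod_range_mul_prod_range_eq_of_agree_from {M : Type*} [CommMonoid M]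
    {a b : ℕ → M} {m n : ℕ} (hab : ∀ k, m ≤ k → a k = b k) (hmn : m ≤ n) :
    (∏ k ∈ range n, a k) * ∏ k ∈ range m, b k = (∏ k ∈ range n, b k) * ∏ k ∈ range m, a k := by
  rw [← prod_range_mul_prod_Ico a hmn, ← prod_range_mul_prod_Ico b hmn,
    prod_congr rfl fun k hk => hab k (mem_Ico.mp hk).1]
  ac_rfl

section ReplacePrefix

variable {α : ℕ → Type*} {m : ℕ}

def replacePrefix (m : ℕ) (g : (k : Fin m) → α k) (ω : ∀ k, α k) : ∀ k, α k :=
  fun k => if h : k < m then g ⟨k, h⟩ else ω k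

theorem replacePrefix_of_le (g : (k : Fin m) → α k) (ω : ∀ k, α k) {k : ℕ} (hk : m ≤ k) :
    replacePrefix m g ω k = ω k :=
  dif_neg hk.not_gt

theorem replacePrefix_fin (g : (k : Fin m) → α k) (ω : ∀ k, α k) (i : Fin m) :
    replacePrefix m g ω i = g i :=
  dif_pos i.isLt

theorem replacePrefix_injective (ω : ∀ k, α k) :
    Function.Injective fun g : (k : Fin m) → α k => replacePrefix m g ω := by
  intro g g' h
  funext i
  simpa only [replacePrefix_fin] using congrFun h i

theorem prod_range_replacePrefix {R : Type*} [CommMonoid R] (p : ∀ k, α k → R)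
    (g : (k : Fin m) → α k) (ω : ∀ k, α k) :
    ∏ k ∈ range m, p k (replacePrefix m g ω k) = ∏ i : Fin m, p i (g i) := by
  rw [← Fin.prod_univ_eq_prod_range]
  simp only [replacePrefix_fin]

end ReplacePrefix

theorem iInter_setOf_forall_lt_eq {α : ℕ → Type*} (ω : ∀ k, α k) :
    ⋂ n, {x : ∀ k, α k | ∀ k < n, x k = ω k} = {ω} := by
  ext x
  simp only [Set.mem_iInter, Set.mem_ofPred_eq, Set.mem_singleton_iff]
  exact ⟨fun h => funext fun k => h (k + 1) k k.lt_succ_self, fun h _ k _ => h ▸ rfl⟩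

section ProductMeasure

variable {α : ℕ → Type*} [∀ k, MeasurableSpace (α k)] [∀ k, MeasurableSingletonClass (α k)]
  {μ : Measure (∀ k, α k)} [IsFiniteMeasure μ] {p : ∀ k, α k → ℝ}

theorem measurableSet_setOf_forall_lt_eq (n : ℕ) (ω : ∀ k, α k) :
    MeasurableSet {x : ∀ k, α k | ∀ k < n, x k = ω k} := by
  measurability

theorem tendsto_measure_setOf_forall_lt_eq (ω : ∀ k, α k) :
    Tendsto (fun n => μ {x | ∀ k < n, x k = ω k}) atTop (𝓝 (μ {ω})) := by
  rw [← iInter_setOf_forall_lt_eq ω]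
  exact tendsto_measure_iInter_atTop
    (fun n => (measurableSet_setOf_forall_lt_eq n ω).nullMeasurableSet)
    (fun _ _ hmn _ hx k hk => hx k (hk.trans_le hmn)) ⟨0, measure_ne_top μ _⟩

variable (hp : ∀ k i, 0 ≤ p k i)
  (hμ : ∀ (n : ℕ) (ω : ∀ k, α k),
    μ {x | ∀ k < n, x k = ω k} = ENNReal.ofReal (∏ k ∈ range n, p k (ω k)))
include hp hμ

theorem tendsto_prod_range_toReal_measure_singleton (ω : ∀ k, α k) :
    Tendsto (fun n => ∏ k ∈ range n, p k (ω k)) atTop (𝓝 (μ {ω}).toReal) := by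
  have := (ENNReal.tendsto_toReal (measure_ne_top μ {ω})).comp
    (tendsto_measure_setOf_forall_lt_eq ω)
  simpa only [Function.comp_def, hμ, ENNReal.toReal_ofReal (prod_nonneg fun k _ => hp k _)]
    using this

theorem toReal_measure_singleton_mul_prod_range_eq {m : ℕ} {ω ω' : ∀ k, α k}
    (h : ∀ k, m ≤ k → ω k = ω' k) :
    (μ {ω}).toReal * ∏ k ∈ range m, p k (ω' k) = (μ {ω'}).toReal * ∏ k ∈ range m, p k (ω k) :=
  tendsto_nhds_unique ((tendsto_prod_range_toReal_measure_singleton hp hμ ω).mul_const _)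
    (((tendsto_prod_range_toReal_measure_singleton hp hμ ω').mul_const _).congr'
      (eventually_atTop.2 ⟨m, fun _ hn =>
        (prod_range_mul_prod_range_eq_of_agree_from (fun k hk => by rw [h k hk]) hn).symm⟩))

variable [∀ k, Fintype (α k)] (hps : ∀ k, ∑ i, p k i = 1)
include hps

theorem sum_toReal_measure_singleton_replacePrefix_mul (m : ℕ) (ω : ∀ k, α k) :
    (∑ g : (k : Fin m) → α k, (μ {replacePrefix m g ω}).toReal) * ∏ k ∈ range m, p k (ω k) =
      (μ {ω}).toReal := by
  calc (∑ g : (k : Fin m) → α k, (μ {replacePrefix m g ω}).toReal) * ∏ k ∈ range m, p k (ω k)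
      = ∑ g : (k : Fin m) → α k, (μ {ω}).toReal * ∏ i : Fin m, p i (g i) := by
        rw [sum_mul]
        refine sum_congr rfl fun g _ => ?_
        rw [toReal_measure_singleton_mul_prod_range_eq hp hμ
          fun k hk => replacePrefix_of_le g ω hk, prod_range_replacePrefix]
    _ = (μ {ω}).toReal * ∏ i : Fin m, ∑ j, p i j := by rw [← mul_sum, Fintype.prod_sum]
    _ = (μ {ω}).toReal := by simp only [hps, prod_const_one, mul_one]

theorem toReal_measure_singleton_le_prod_range_mul (m : ℕ) (ω : ∀ k, α k) :
    (μ {ω}).toReal ≤ (∏ k ∈ range m, p k (ω k)) * (μ {x | μ {x} ≠ 0}).toReal := by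
  classical
  have hatoms : ∑ g : (k : Fin m) → α k, μ {replacePrefix m g ω} ≤ μ {x | μ {x} ≠ 0} := by
    rw [← sum_image (f := fun x => μ {x}) (replacePrefix_injective ω).injOn]
    exact sum_measure_singleton_le_measure_setOf_ne_zero μ _
  rw [← sum_toReal_measure_singleton_replacePrefix_mul hp hμ hps m ω, mul_comm,
    ← ENNReal.toReal_sum fun _ _ => measure_ne_top μ _]
  gcongr
  · exact prod_nonneg fun k _ => hp k _
  · exact measure_ne_top μ _

end ProductMeasure

/-- If `∏_{k=1}^∞ max_i p_{ik} > 0` (i.e. the nonincreasing partial products of the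
column maxima are bounded below by a positive constant), then the infinite product
measure `μ` is purely atomic: the set `A₊ = {ω : μ{ω} > 0}` is countable and
`μ(A₊) = 1`. -/
theorem product_measure_purely_atomic (N : ℕ → ℕ) (p : (k : ℕ) → Fin (N k + 1) → ℝ)
    (μ : Measure ((k : ℕ) → Fin (N k + 1))) [IsProbabilityMeasure μ]
    (hp : ∀ k i, 0 ≤ p k i) (hps : ∀ k, ∑ i, p k i = 1)
    (hμ : ∀ (n : ℕ) (ω : (k : ℕ) → Fin (N k + 1)),
      μ {x | ∀ k < n, x k = ω k} = ENNReal.ofReal (∏ k ∈ Finset.range n, p k (ω k)))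
    (hmax : ∃ c > 0, ∀ n, c ≤ ∏ k ∈ Finset.range n, ⨆ i, p k i) :
    Set.Countable {ω : (k : ℕ) → Fin (N k + 1) | μ {ω} ≠ 0} ∧
    μ {ω : (k : ℕ) → Fin (N k + 1) | μ {ω} ≠ 0} = 1 := by
  refine ⟨Measure.countable_setOf_measure_singleton_ne_zero μ, ?_⟩
  obtain ⟨c, hc, hcle⟩ := hmax
  choose ωmax hωmax using fun k => exists_eq_ciSup_of_finite (f := p k)
  have hlim := tendsto_prod_range_toReal_measure_singleton hp hμ ωmax
  have hpos : 0 < (μ {ωmax}).toReal :=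
    hc.trans_le (ge_of_tendsto' hlim fun n => by simpa only [hωmax] using hcle n)
  have hbound : (μ {ωmax}).toReal ≤ (μ {ωmax}).toReal * (μ {x | μ {x} ≠ 0}).toReal :=
    ge_of_tendsto' (hlim.mul_const _)
      fun m => toReal_measure_singleton_le_prod_range_mul hp hμ hps m ωmax
  have hone : 1 ≤ (μ {x | μ {x} ≠ 0}).toReal :=
    le_of_mul_le_mul_left (by simpa only [mul_one] using hbound) hpos
  refine le_antisymm prob_le_one ?_
  rwa [← ENNReal.ofReal_one, ENNReal.ofReal_le_iff_le_toReal (measure_ne_top μ _)]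
end

section
/- In the Q̃-symbols setting, the image under the coding map f : ∏_k ℕ_k → [0,1] (sending a digit sequence to the unique point of the intersection of the corresponding nested intervals) of the product measure ⊗_k ν_k with ν_k(i) = q_{ik} is Lebesgue measure on [0,1]. -/
open MeasureTheory Filter Finset Topology

namespace QtAux

variable (N : ℕ → ℕ) (q : (k : ℕ) → Fin (N k + 1) → ℝ)

/-- partial sum of weights: `∑_{i < m} q k i`. -/
noncomputable def Cf (k m : ℕ) : ℝ :=
  ∑ i : Fin (N k + 1), if (i : ℕ) < m then q k i else 0

/-- length of the rank-`n` cylinder interval. -/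
noncomputable def Lp (ω : ∀ k, Fin (N k + 1)) (n : ℕ) : ℝ :=
  ∏ s ∈ Finset.range n, q s (ω s)

/-- left endpoint of the rank-`n` cylinder interval. -/
noncomputable def ap (ω : ∀ k, Fin (N k + 1)) (n : ℕ) : ℝ :=
  ∑ k ∈ Finset.range n, Cf N q k (ω k) * Lp N q ω k

variable {N q}

section basic

variable (hq : ∀ k i, 0 < q k i) (hqs : ∀ k, ∑ i, q k i = 1)

lemma Cf_zero (k : ℕ) : Cf N q k 0 = 0 := by simp [Cf]

lemma Cf_succ (k m : ℕ) (h : m ≤ N k) :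
    Cf N q k (m + 1) = Cf N q k m + q k ⟨m, Nat.lt_succ_of_le h⟩ := by
  have key : ∀ i : Fin (N k + 1), (if (i : ℕ) < m + 1 then q k i else 0)
      = (if (i : ℕ) < m then q k i else 0)
        + (if i = ⟨m, Nat.lt_succ_of_le h⟩ then q k i else 0) := by
    intro i
    rcases lt_trichotomy (i : ℕ) m with h1 | h1 | h1
    · rw [if_pos (by omega), if_pos h1, if_neg (by simp [Fin.ext_iff]; omega), add_zero]
    · rw [if_pos (by omega), if_neg (by omega), if_pos (by simp [Fin.ext_iff, h1]), zero_add]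
    · rw [if_neg (by omega), if_neg (by omega), if_neg (by simp [Fin.ext_iff]; omega), add_zero]
  simp only [Cf, key, Finset.sum_add_distrib]
  rw [Finset.sum_ite_eq' Finset.univ]
  simp

include hq in
lemma Cf_mono (k : ℕ) : Monotone (Cf N q k) := by
  intro m m' hmm
  refine Finset.sum_le_sum fun i _ => ?_
  by_cases hi : (i : ℕ) < m
  · rw [if_pos hi, if_pos (lt_of_lt_of_le hi hmm)]
  · rw [if_neg hi]
    by_cases hi' : (i : ℕ) < m'
    · rw [if_pos hi']; exact (hq k i).le
    · rw [if_neg hi']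

include hq in
lemma Cf_nonneg (k m : ℕ) : 0 ≤ Cf N q k m := by
  refine Finset.sum_nonneg fun i _ => ?_
  by_cases hi : (i : ℕ) < m
  · rw [if_pos hi]; exact (hq k i).le
  · rw [if_neg hi]

include hqs in
lemma Cf_top (k m : ℕ) (h : N k + 1 ≤ m) : Cf N q k m = 1 := by
  rw [Cf, ← hqs k]
  refine Finset.sum_congr rfl fun i _ => ?_
  rw [if_pos (lt_of_lt_of_le i.isLt h)]

include hq hqs in
lemma Cf_le_one (k m : ℕ) : Cf N q k m ≤ 1 := by
  rcases le_total m (N k + 1) with h | h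
  · rw [← Cf_top hqs k (N k + 1) le_rfl]; exact Cf_mono hq k h
  · rw [Cf_top hqs k m h]

lemma Cf_add_q (k : ℕ) (j : Fin (N k + 1)) :
    Cf N q k ((j : ℕ) + 1) = Cf N q k j + q k j := by
  rw [Cf_succ k j (Nat.lt_succ_iff.mp j.isLt)]

include hq in
lemma Lp_pos (ω : ∀ k, Fin (N k + 1)) (n : ℕ) : 0 < Lp N q ω n :=
  Finset.prod_pos fun s _ => hq s (ω s)

lemma Lp_succ (ω : ∀ k, Fin (N k + 1)) (n : ℕ) :
    Lp N q ω (n + 1) = Lp N q ω n * q n (ω n) := Finset.prod_range_succ _ _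

lemma ap_succ (ω : ∀ k, Fin (N k + 1)) (n : ℕ) :
    ap N q ω (n + 1) = ap N q ω n + Cf N q n (ω n) * Lp N q ω n := Finset.sum_range_succ _ _

include hq in
lemma ap_nonneg (ω : ∀ k, Fin (N k + 1)) (n : ℕ) : 0 ≤ ap N q ω n :=
  Finset.sum_nonneg fun k _ => mul_nonneg (Cf_nonneg hq k _) (Lp_pos hq ω k).le

include hq in
lemma ap_mono (ω : ∀ k, Fin (N k + 1)) : Monotone (fun n => ap N q ω n) := by
  refine monotone_nat_of_le_succ fun n => ?_
  rw [ap_succ]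
  nlinarith [Cf_nonneg hq n ((ω n : ℕ)), Lp_pos hq ω n]

include hq hqs in
lemma apLp_antitone (ω : ∀ k, Fin (N k + 1)) :
    Antitone (fun n => ap N q ω n + Lp N q ω n) := by
  refine antitone_nat_of_succ_le fun n => ?_
  rw [ap_succ, Lp_succ]
  have h1 : Cf N q n (ω n) + q n (ω n) ≤ 1 := by
    rw [← Cf_add_q n (ω n)]; exact Cf_le_one hq hqs n _
  nlinarith [Lp_pos hq ω n]

include hq hqs in
lemma apLp_le_one (ω : ∀ k, Fin (N k + 1)) (n : ℕ) :
    ap N q ω n + Lp N q ω n ≤ 1 := by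
  have := apLp_antitone hq hqs ω (Nat.zero_le n)
  simpa [ap, Lp] using this

include hq hqs in
lemma ap_le_apLp (ω : ∀ k, Fin (N k + 1)) {n m : ℕ} (h : n ≤ m) :
    ap N q ω m ≤ ap N q ω n + Lp N q ω n := by
  have h1 : ap N q ω m + Lp N q ω m ≤ ap N q ω n + Lp N q ω n := apLp_antitone hq hqs ω h
  nlinarith [Lp_pos hq ω m]

lemma coding_eq (ω : ∀ k, Fin (N k + 1)) :
    codingMap N q ω = ∑' k, Cf N q k (ω k) * Lp N q ω k := rfl

lemma sum_range_eq_ap (ω : ∀ k, Fin (N k + 1)) (n : ℕ) :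
    ∑ k ∈ Finset.range n, Cf N q k (ω k) * Lp N q ω k = ap N q ω n := rfl

include hq in
lemma term_nonneg (ω : ∀ k, Fin (N k + 1)) (k : ℕ) :
    0 ≤ Cf N q k (ω k) * Lp N q ω k :=
  mul_nonneg (Cf_nonneg hq k _) (Lp_pos hq ω k).le

include hq hqs in
lemma coding_summable (ω : ∀ k, Fin (N k + 1)) :
    Summable (fun k => Cf N q k (ω k) * Lp N q ω k) := by
  refine summable_of_sum_range_le (c := 1) (term_nonneg hq ω) fun n => ?_
  rw [sum_range_eq_ap]
  nlinarith [apLp_le_one hq hqs ω n, Lp_pos hq ω n]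

include hq hqs in
lemma ap_le_coding (ω : ∀ k, Fin (N k + 1)) (n : ℕ) :
    ap N q ω n ≤ codingMap N q ω := by
  rw [coding_eq, ← sum_range_eq_ap (q := q) ω n]
  exact Summable.sum_le_tsum _ (fun k _ => term_nonneg hq ω k) (coding_summable hq hqs ω)

include hq hqs in
lemma coding_le (ω : ∀ k, Fin (N k + 1)) (n : ℕ) :
    codingMap N q ω ≤ ap N q ω n + Lp N q ω n := by
  rw [coding_eq]
  have htend := (coding_summable hq hqs ω).hasSum.tendsto_sum_nat
  refine le_of_tendsto htend ?_
  filter_upwards [eventually_ge_atTop n] with m hm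
  rw [sum_range_eq_ap]
  exact ap_le_apLp hq hqs ω hm

end basic

section dig

variable (N q) in
open scoped Classical in
/-- the digit chosen at step `k` when the current interval is `[a, a+L)`. -/
noncomputable def pick (k : ℕ) (a L x : ℝ) : Fin (N k + 1) :=
  ⟨Nat.findGreatest (fun m => a + Cf N q k m * L ≤ x) (N k),
    Nat.lt_succ_of_le (Nat.findGreatest_le _)⟩

variable (N q) in
/-- the state `(a, L)` of the digit algorithm after `n` steps. -/
noncomputable def state (x : ℝ) : ℕ → ℝ × ℝ
  | 0 => (0, 1)
  | n + 1 =>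
    ((state x n).1 + Cf N q n (pick N q n (state x n).1 (state x n).2 x) * (state x n).2,
     (state x n).2 * q n (pick N q n (state x n).1 (state x n).2 x))

variable (N q) in
/-- the digit sequence of `x`. -/
noncomputable def dig (x : ℝ) (k : ℕ) : Fin (N k + 1) :=
  pick N q k (state N q x k).1 (state N q x k).2 x

variable (hq : ∀ k i, 0 < q k i) (hqs : ∀ k, ∑ i, q k i = 1)
variable {k : ℕ} {a L x : ℝ}

open scoped Classical in
lemma pick_coe (k : ℕ) (a L x : ℝ) :
    (pick N q k a L x : ℕ)
      = Nat.findGreatest (fun m => a + Cf N q k m * L ≤ x) (N k) := rfl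

open scoped Classical in
lemma pick_le (hax : a ≤ x) :
    a + Cf N q k (pick N q k a L x : ℕ) * L ≤ x := by
  have h0 : a + Cf N q k 0 * L ≤ x := by
    rw [Cf_zero]; simpa using hax
  have := Nat.findGreatest_spec (P := fun m => a + Cf N q k m * L ≤ x)
    (Nat.zero_le (N k)) h0
  rw [pick_coe]
  exact this

include hqs in
open scoped Classical in
lemma pick_lt (hL : 0 < L) (hxL : x < a + L) :
    x < a + Cf N q k ((pick N q k a L x : ℕ) + 1) * L := by
  by_cases h : (pick N q k a L x : ℕ) + 1 ≤ N k
  · by_contra hcon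
    push_neg at hcon
    have h2 : (pick N q k a L x : ℕ) + 1 ≤ (pick N q k a L x : ℕ) := by
      rw [pick_coe]
      exact Nat.le_findGreatest h hcon
    omega
  · have hle : (pick N q k a L x : ℕ) ≤ N k := Nat.lt_succ_iff.mp (pick N q k a L x).isLt
    have hNk : (pick N q k a L x : ℕ) = N k := by omega
    rw [hNk, Cf_top hqs k (N k + 1) le_rfl, one_mul]
    exact hxL

include hq in
lemma pick_uniq (hL : 0 < L) {m m' : ℕ}
    (h1 : a + Cf N q k m * L ≤ x) (h2 : x < a + Cf N q k (m + 1) * L)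
    (h1' : a + Cf N q k m' * L ≤ x) (h2' : x < a + Cf N q k (m' + 1) * L) :
    m = m' := by
  by_contra hne
  rcases Nat.lt_or_ge m m' with h | h
  · have : Cf N q k (m + 1) ≤ Cf N q k m' := Cf_mono hq k h
    nlinarith
  · have hlt : m' < m := by omega
    have : Cf N q k (m' + 1) ≤ Cf N q k m := Cf_mono hq k hlt
    nlinarith

lemma dig_def (x : ℝ) (k : ℕ) :
    dig N q x k = pick N q k (state N q x k).1 (state N q x k).2 x := rfl

/-- if the first `n` digits of `x` agree with `ω`, the state is the cylinder of `ω`. -/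
lemma state_eq {x : ℝ} {ω : ∀ k, Fin (N k + 1)} :
    ∀ {n : ℕ}, (∀ k < n, dig N q x k = ω k) →
      state N q x n = (ap N q ω n, Lp N q ω n) := by
  intro n
  induction n with
  | zero => intro _; simp [state, ap, Lp]
  | succ n ih =>
    intro h
    have hn : state N q x n = (ap N q ω n, Lp N q ω n) :=
      ih fun k hk => h k (Nat.lt_succ_of_lt hk)
    have hd := h n (Nat.lt_succ_self n)
    rw [dig_def, hn] at hd
    simp only [state, hn, hd]
    rw [Prod.mk.injEq]
    exact ⟨(ap_succ ω n).symm, (Lp_succ ω n).symm⟩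

include hq hqs in
lemma prefix_set (ω : ∀ k, Fin (N k + 1)) :
    ∀ n : ℕ, {x : ℝ | x ∈ Set.Ico (0:ℝ) 1 ∧ ∀ k < n, dig N q x k = ω k}
      = Set.Ico (ap N q ω n) (ap N q ω n + Lp N q ω n) := by
  intro n
  induction n with
  | zero =>
    ext x
    simp [ap, Lp]
  | succ n ih =>
    have hCle : Cf N q n ((ω n : ℕ) + 1) ≤ 1 := Cf_le_one hq hqs n _
    have hC0 : 0 ≤ Cf N q n (ω n) := Cf_nonneg hq n _
    have hCq : Cf N q n ((ω n : ℕ) + 1) = Cf N q n (ω n) + q n (ω n) := Cf_add_q n (ω n)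
    have hL : 0 < Lp N q ω n := Lp_pos hq ω n
    have hsub : Set.Ico (ap N q ω (n+1)) (ap N q ω (n+1) + Lp N q ω (n+1)) ⊆
        Set.Ico (ap N q ω n) (ap N q ω n + Lp N q ω n) := by
      apply Set.Ico_subset_Ico
      · rw [ap_succ]; nlinarith
      · rw [ap_succ, Lp_succ]; nlinarith
    ext x
    constructor
    · rintro ⟨hx01, hdig⟩
      have hxn : x ∈ Set.Ico (ap N q ω n) (ap N q ω n + Lp N q ω n) := by
        rw [← ih]; exact ⟨hx01, fun k hk => hdig k (Nat.lt_succ_of_lt hk)⟩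
      have hst : state N q x n = (ap N q ω n, Lp N q ω n) :=
        state_eq fun k hk => hdig k (Nat.lt_succ_of_lt hk)
      have hde : dig N q x n = pick N q n (ap N q ω n) (Lp N q ω n) x := by
        rw [dig_def, hst]
      have hdn : dig N q x n = ω n := hdig n (Nat.lt_succ_self n)
      have h1 : ap N q ω n + Cf N q n ((ω n : ℕ)) * Lp N q ω n ≤ x := by
        rw [← hdn, hde]; exact pick_le hxn.1
      have h2 : x < ap N q ω n + Cf N q n ((ω n : ℕ) + 1) * Lp N q ω n := by
        rw [← hdn, hde]; exact pick_lt hqs hL hxn.2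
      refine ⟨by rw [ap_succ]; exact h1, ?_⟩
      rw [ap_succ, Lp_succ]
      calc x < ap N q ω n + Cf N q n ((ω n : ℕ) + 1) * Lp N q ω n := h2
        _ = ap N q ω n + Cf N q n (ω n) * Lp N q ω n + Lp N q ω n * q n (ω n) := by
            rw [hCq]; ring
    · intro hx
      have hxn : x ∈ Set.Ico (ap N q ω n) (ap N q ω n + Lp N q ω n) := hsub hx
      have hprev : x ∈ {x : ℝ | x ∈ Set.Ico (0:ℝ) 1 ∧ ∀ k < n, dig N q x k = ω k} := by
        rw [ih]; exact hxn
      have hprev1 : x ∈ Set.Ico (0:ℝ) 1 := hprev.1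
      have hprev2 : ∀ k < n, dig N q x k = ω k := hprev.2
      have hst : state N q x n = (ap N q ω n, Lp N q ω n) := state_eq hprev2
      have hde : dig N q x n = pick N q n (ap N q ω n) (Lp N q ω n) x := by
        rw [dig_def, hst]
      have h1 : ap N q ω n + Cf N q n ((dig N q x n : ℕ)) * Lp N q ω n ≤ x := by
        rw [hde]; exact pick_le hxn.1
      have h2 : x < ap N q ω n + Cf N q n ((dig N q x n : ℕ) + 1) * Lp N q ω n := by
        rw [hde]; exact pick_lt hqs hL hxn.2
      have h1' : ap N q ω n + Cf N q n ((ω n : ℕ)) * Lp N q ω n ≤ x := by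
        rw [← ap_succ]; exact hx.1
      have h2' : x < ap N q ω n + Cf N q n ((ω n : ℕ) + 1) * Lp N q ω n := by
        calc x < ap N q ω (n+1) + Lp N q ω (n+1) := hx.2
          _ = ap N q ω n + Cf N q n ((ω n : ℕ) + 1) * Lp N q ω n := by
              rw [ap_succ, Lp_succ, hCq]; ring
      have hcoe : (dig N q x n : ℕ) = (ω n : ℕ) := pick_uniq hq hL h1 h2 h1' h2'
      have hdn : dig N q x n = ω n := Fin.ext hcoe
      refine ⟨hprev1, fun k hk => ?_⟩
      rcases Nat.lt_succ_iff_lt_or_eq.mp hk with h | h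
      · exact hprev2 k h
      · subst h; exact hdn

include hq in
lemma Lp_le_sup (ω : ∀ k, Fin (N k + 1)) (n : ℕ) :
    Lp N q ω n ≤ ∏ k ∈ Finset.range n, ⨆ i, q k i := by
  refine Finset.prod_le_prod (fun k _ => (hq k (ω k)).le) fun k _ => ?_
  exact le_ciSup (Set.Finite.bddAbove (Set.finite_range _)) (ω k)

include hq hqs in
lemma coding_dig (hmax : Tendsto (fun n => ∏ k ∈ Finset.range n, ⨆ i, q k i) atTop (nhds 0))
    (hx : x ∈ Set.Ico (0:ℝ) 1) :
    codingMap N q (dig N q x) = x := by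
  set ω := dig N q x with hω
  have hmem : ∀ n : ℕ, x ∈ Set.Ico (ap N q ω n) (ap N q ω n + Lp N q ω n) := by
    intro n
    rw [← prefix_set hq hqs ω n]
    exact ⟨hx, fun k _ => rfl⟩
  have habs : ∀ n : ℕ, |codingMap N q ω - x| ≤ ∏ k ∈ Finset.range n, ⨆ i, q k i := by
    intro n
    have h1 : ap N q ω n ≤ codingMap N q ω := ap_le_coding hq hqs ω n
    have h2 : codingMap N q ω ≤ ap N q ω n + Lp N q ω n := coding_le hq hqs ω n
    have h3 := (hmem n).1
    have h4 := (hmem n).2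
    have h5 := Lp_le_sup hq ω n
    rw [abs_le]
    constructor <;> nlinarith
  have : |codingMap N q ω - x| ≤ 0 := by
    refine le_of_tendsto_of_tendsto' tendsto_const_nhds hmax habs
  have := abs_nonneg (codingMap N q ω - x)
  have : |codingMap N q ω - x| = 0 := le_antisymm ‹_› ‹_›
  linarith [abs_eq_zero.mp this, sub_eq_zero.mp (abs_eq_zero.mp this)]

end dig

section meas

variable (N q) in
/-- extension of a finite prefix to a full digit sequence. -/
noncomputable def extPrefix (n : ℕ) (w : ∀ s : Fin n, Fin (N s + 1)) (k : ℕ) :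
    Fin (N k + 1) :=
  if h : k < n then w ⟨k, h⟩ else ⟨0, Nat.succ_pos _⟩

lemma extPrefix_lt {n : ℕ} {w : ∀ s : Fin n, Fin (N s + 1)} {k : ℕ} (h : k < n) :
    extPrefix N n w k = w ⟨k, h⟩ := dif_pos h

variable (hq : ∀ k i, 0 < q k i) (hqs : ∀ k, ∑ i, q k i = 1)

include hq hqs in
lemma digset_eq (k : ℕ) (j : Fin (N k + 1)) :
    {x : ℝ | x ∈ Set.Ico (0:ℝ) 1 ∧ dig N q x k = j}
      = ⋃ (w : ∀ s : Fin (k+1), Fin (N s + 1)) (_ : w ⟨k, Nat.lt_succ_self k⟩ = j),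
          {x : ℝ | x ∈ Set.Ico (0:ℝ) 1 ∧
            ∀ s < k + 1, dig N q x s = extPrefix N (k+1) w s} := by
  ext x
  simp only [Set.mem_setOf_eq, Set.mem_iUnion]
  constructor
  · rintro ⟨hx01, hdig⟩
    refine ⟨fun s => dig N q x (s : ℕ), hdig, hx01, fun s hs => ?_⟩
    rw [extPrefix_lt hs]
  · rintro ⟨w, hwk, hx01, hall⟩
    refine ⟨hx01, ?_⟩
    have := hall k (Nat.lt_succ_self k)
    rw [extPrefix_lt (Nat.lt_succ_self k)] at this
    rw [this, hwk]

include hq hqs in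
lemma digset_meas (k : ℕ) (j : Fin (N k + 1)) :
    MeasurableSet {x : ℝ | x ∈ Set.Ico (0:ℝ) 1 ∧ dig N q x k = j} := by
  rw [digset_eq hq hqs k j]
  refine MeasurableSet.iUnion fun w => MeasurableSet.iUnion fun _ => ?_
  rw [prefix_set hq hqs (extPrefix N (k+1) w) (k+1)]
  exact measurableSet_Ico

variable (N q) in
/-- measurable version of the digit map, trivial outside `[0,1)`. -/
noncomputable def Dig (x : ℝ) : ∀ k, Fin (N k + 1) :=
  dig N q (if x ∈ Set.Ico (0:ℝ) 1 then x else 0)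

lemma Dig_of_mem (hx : x ∈ Set.Ico (0:ℝ) 1) : Dig N q x = dig N q x := by
  rw [Dig, if_pos hx]

include hq hqs in
lemma Dig_measurable : Measurable (Dig N q) := by
  refine measurable_pi_lambda _ fun k => measurable_to_countable' fun j => ?_
  have hset : (fun x => Dig N q x k) ⁻¹' {j}
      = {x : ℝ | x ∈ Set.Ico (0:ℝ) 1 ∧ dig N q x k = j}
        ∪ ((Set.Ico (0:ℝ) 1)ᶜ ∩ {x : ℝ | dig N q (0:ℝ) k = j}) := by
    ext x
    simp only [Set.mem_preimage, Set.mem_singleton_iff, Set.mem_union, Set.mem_inter_iff,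
      Set.mem_setOf_eq, Set.mem_compl_iff]
    by_cases hx : x ∈ Set.Ico (0:ℝ) 1
    · rw [Dig, if_pos hx]
      constructor
      · intro h
        exact Or.inl ⟨hx, h⟩
      · rintro (⟨_, h⟩ | ⟨h, _⟩)
        · exact h
        · exact absurd hx h
    · rw [Dig, if_neg hx]
      constructor
      · intro h
        exact Or.inr ⟨hx, h⟩
      · rintro (⟨h, _⟩ | ⟨_, h⟩)
        · exact absurd h hx
        · exact h
  rw [hset]
  refine (digset_meas hq hqs k j).union (measurableSet_Ico.compl.inter ?_)
  by_cases h : dig N q (0:ℝ) k = j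
  · simp [h]
  · simp [h]

include hq hqs in
lemma coding_measurable : Measurable (codingMap N q) := by
  have hap : ∀ n : ℕ, Measurable (fun ω : ∀ k, Fin (N k + 1) => ap N q ω n) := by
    intro n
    refine Finset.measurable_sum _ fun k _ => Measurable.mul ?_ ?_
    · exact (Measurable.of_discrete (f := fun j : Fin (N k + 1) => Cf N q k (j : ℕ))).comp
        (measurable_pi_apply k)
    · exact Finset.measurable_prod _ fun s _ =>
        (Measurable.of_discrete (f := fun j : Fin (N s + 1) => q s j)).comp
          (measurable_pi_apply s)
  refine measurable_of_tendsto_metrizable hap ?_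
  rw [tendsto_pi_nhds]
  intro ω
  have := (coding_summable hq hqs ω).hasSum.tendsto_sum_nat
  rw [coding_eq]
  exact this

variable (N) in
/-- rank-`n` cylinder set in digit space. -/
def cylSet (n : ℕ) (ω : ∀ k, Fin (N k + 1)) : Set (∀ k, Fin (N k + 1)) :=
  {x | ∀ k < n, x k = ω k}

variable (N) in
/-- the collection of all cylinder sets. -/
def cyls : Set (Set (∀ k, Fin (N k + 1))) :=
  {S | ∃ n ω, S = cylSet N n ω}

lemma cylSet_meas (n : ℕ) (ω : ∀ k, Fin (N k + 1)) : MeasurableSet (cylSet N n ω) := by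
  have : cylSet N n ω = ⋂ (k : ℕ) (_ : k < n), (fun x : ∀ k, Fin (N k + 1) => x k) ⁻¹' {ω k} := by
    ext x
    simp [cylSet]
  rw [this]
  exact MeasurableSet.iInter fun k => MeasurableSet.iInter fun _ =>
    measurable_pi_apply k (measurableSet_singleton _)

lemma cyl_inter_of_le {n m : ℕ} (hnm : n ≤ m) {ω ω' : ∀ k, Fin (N k + 1)}
    (hne : (cylSet N n ω ∩ cylSet N m ω').Nonempty) :
    cylSet N n ω ∩ cylSet N m ω' = cylSet N m ω' := by
  obtain ⟨z, hz1, hz2⟩ := hne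
  refine Set.inter_eq_self_of_subset_right fun x hx k hk => ?_
  rw [hx k (lt_of_lt_of_le hk hnm), ← hz2 k (lt_of_lt_of_le hk hnm), hz1 k hk]

lemma isPiSystem_cyls : IsPiSystem (cyls N) := by
  rintro S ⟨n, ω, rfl⟩ T ⟨m, ω', rfl⟩ hne
  rcases le_total n m with h | h
  · rw [cyl_inter_of_le h hne]
    exact ⟨m, ω', rfl⟩
  · rw [Set.inter_comm] at hne ⊢
    rw [cyl_inter_of_le h hne]
    exact ⟨n, ω, rfl⟩

lemma eval_preimage_mem (k : ℕ) (j : Fin (N k + 1)) :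
    (fun x : ∀ k, Fin (N k + 1) => x k) ⁻¹' {j}
      = ⋃ (w : ∀ s : Fin (k+1), Fin (N s + 1)) (_ : w ⟨k, Nat.lt_succ_self k⟩ = j),
          cylSet N (k+1) (extPrefix N (k+1) w) := by
  ext x
  simp only [Set.mem_preimage, Set.mem_singleton_iff, Set.mem_iUnion, cylSet,
    Set.mem_setOf_eq]
  constructor
  · intro h
    refine ⟨fun s => x (s : ℕ), h, fun s hs => ?_⟩
    rw [extPrefix_lt hs]
  · rintro ⟨w, hwk, hall⟩
    have := hall k (Nat.lt_succ_self k)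
    rw [extPrefix_lt (Nat.lt_succ_self k)] at this
    rw [this, hwk]

lemma pi_eq_generateFrom :
    (MeasurableSpace.pi : MeasurableSpace (∀ k, Fin (N k + 1)))
      = MeasurableSpace.generateFrom (cyls N) := by
  refine le_antisymm ?_ ?_
  · refine iSup_le fun k => ?_
    have hm : @Measurable _ _ (MeasurableSpace.generateFrom (cyls N)) _
        (fun x : ∀ k, Fin (N k + 1) => x k) := by
      intro s _
      have hs : (fun x : ∀ k, Fin (N k + 1) => x k) ⁻¹' s
          = ⋃ j ∈ s, (fun x : ∀ k, Fin (N k + 1) => x k) ⁻¹' {j} := by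
        ext y
        simp
      rw [hs]
      refine MeasurableSet.biUnion (Set.to_countable _) fun j _ => ?_
      rw [eval_preimage_mem]
      refine MeasurableSet.iUnion fun w => MeasurableSet.iUnion fun _ =>
        MeasurableSpace.measurableSet_generateFrom ⟨k + 1, extPrefix N (k+1) w, rfl⟩
    exact measurable_iff_comap_le.mp hm
  · refine MeasurableSpace.generateFrom_le ?_
    rintro S ⟨n, ω, rfl⟩
    exact cylSet_meas n ω

variable (hq : ∀ k i, 0 < q k i) (hqs : ∀ k, ∑ i, q k i = 1)

include hq hqs in
lemma nu_eq_map (ν : Measure (∀ k, Fin (N k + 1))) [IsProbabilityMeasure ν]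
    (hν : ∀ (n : ℕ) (ω : ∀ k, Fin (N k + 1)),
      ν {x | ∀ k < n, x k = ω k} = ENNReal.ofReal (∏ k ∈ Finset.range n, q k (ω k))) :
    ν = Measure.map (Dig N q) (volume.restrict (Set.Ico (0:ℝ) 1)) := by
  have hDm : Measurable (Dig N q) := Dig_measurable hq hqs
  refine MeasureTheory.ext_of_generate_finite (cyls N) pi_eq_generateFrom
    isPiSystem_cyls ?_ ?_
  · rintro S ⟨n, ω, rfl⟩
    have hms : MeasurableSet (cylSet N n ω) := cylSet_meas n ω
    rw [Measure.map_apply hDm hms, Measure.restrict_apply (hDm hms)]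
    have hset : Dig N q ⁻¹' cylSet N n ω ∩ Set.Ico (0:ℝ) 1
        = {x : ℝ | x ∈ Set.Ico (0:ℝ) 1 ∧ ∀ k < n, dig N q x k = ω k} := by
      ext x
      simp only [Set.mem_inter_iff, Set.mem_preimage, cylSet, Set.mem_setOf_eq]
      constructor
      · rintro ⟨h1, h2⟩
        rw [Dig_of_mem h2] at h1
        exact ⟨h2, h1⟩
      · rintro ⟨h1, h2⟩
        rw [Dig_of_mem h1]
        exact ⟨h2, h1⟩
    rw [hset, prefix_set hq hqs ω n, Real.volume_Ico]
    have heq : ap N q ω n + Lp N q ω n - ap N q ω n = Lp N q ω n := by ring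
    rw [heq]
    simp only [cylSet]
    rw [hν n ω]
    rfl
  · rw [Measure.map_apply hDm MeasurableSet.univ, Set.preimage_univ,
      Measure.restrict_apply MeasurableSet.univ, Set.univ_inter, Real.volume_Ico]
    simp

end meas

end QtAux


/-- The pushforward under the coding map `f` of the infinite product measure `ν`
with marginals `ν_k(i) = q_{ik}` (characterized by its values on cylinders) is
Lebesgue measure on `[0,1]`. -/
theorem map_codingMap_eq_volume (N : ℕ → ℕ) (q : (k : ℕ) → Fin (N k + 1) → ℝ)
    (ν : Measure ((k : ℕ) → Fin (N k + 1))) [IsProbabilityMeasure ν]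
    (hq : ∀ k i, 0 < q k i) (hqs : ∀ k, ∑ i, q k i = 1)
    (hmax : Tendsto (fun n => ∏ k ∈ Finset.range n, ⨆ i, q k i) atTop (nhds 0))
    (hν : ∀ (n : ℕ) (ω : (k : ℕ) → Fin (N k + 1)),
      ν {x | ∀ k < n, x k = ω k} = ENNReal.ofReal (∏ k ∈ Finset.range n, q k (ω k))) :
    Measure.map (codingMap N q) ν = volume.restrict (Set.Icc (0 : ℝ) 1) := by
  have hDm : Measurable (QtAux.Dig N q) := QtAux.Dig_measurable hq hqs
  have hcm : Measurable (codingMap N q) := QtAux.coding_measurable hq hqs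
  have hν' : ν = Measure.map (QtAux.Dig N q) (volume.restrict (Set.Ico (0:ℝ) 1)) :=
    QtAux.nu_eq_map hq hqs ν hν
  have hae : (codingMap N q ∘ QtAux.Dig N q) =ᵐ[volume.restrict (Set.Ico (0:ℝ) 1)] id := by
    filter_upwards [ae_restrict_mem measurableSet_Ico] with x hx
    simp only [Function.comp_apply, id_eq]
    rw [QtAux.Dig_of_mem hx]
    exact QtAux.coding_dig hq hqs hmax hx
  rw [hν', Measure.map_map hcm hDm, Measure.map_congr hae, Measure.map_id,
    Measure.restrict_congr_set Ico_ae_eq_Icc]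
end

section
/- Suppose there exists q⁺ > 0 with q_{ik} ≥ q⁺ for all i, k. Then ∏_{k=1}^∞ ∑_i √(p_{ik} q_{ik}) > 0 if and only if ∑_{k=1}^∞ ∑_i (1 - p_{ik}/q_{ik})² q_{ik}² < ∞ (equivalently, ∑_k ∑_i (q_{ik} - p_{ik})² < ∞). -/
/-!
Write `A` for the affinity `∑ᵢ √(pᵢ qᵢ)`. Expanding squares gives `∑ᵢ (√qᵢ - √pᵢ)² = 2 (1 - A)`,
and `(q - p)² = (√q - √p)² (√q + √p)²` with `q⁺ ≤ (√q + √p)² ≤ 4`, so `∑ᵢ (qᵢₖ - pᵢₖ)²` is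
comparable to `1 - Aₖ` uniformly in `k`. Finally, for factors in `(0, 1]` the partial products
stay away from `0` iff `∑ₖ log Aₖ` converges, iff `∑ₖ (1 - Aₖ)` converges since
`-log A ≈ 1 - A` near `1`.
-/

open Finset

theorem exists_pos_le_prod_range_iff_summable_log {a : ℕ → ℝ} (ha0 : ∀ k, 0 < a k)
    (ha1 : ∀ k, a k ≤ 1) :
    (∃ c > 0, ∀ n, c ≤ ∏ k ∈ range n, a k) ↔ Summable fun k => Real.log (a k) := by
  have hprod (n : ℕ) : ∏ k ∈ range n, a k = Real.exp (∑ k ∈ range n, Real.log (a k)) := by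
    rw [Real.exp_sum]
    exact prod_congr rfl fun k _ => (Real.exp_log (ha0 k)).symm
  have hlog (k : ℕ) : 0 ≤ -Real.log (a k) := neg_nonneg.2 (Real.log_nonpos (ha0 k).le (ha1 k))
  constructor
  · rintro ⟨c, hc, hle⟩
    refine (summable_of_sum_range_le hlog (c := -Real.log c) fun n => ?_).neg.congr
      fun k => neg_neg _
    have := Real.log_le_log hc ((hle n).trans_eq (hprod n))
    rw [Real.log_exp] at this
    rw [sum_neg_distrib]
    linarith
  · intro hs
    refine ⟨Real.exp (∑' k, Real.log (a k)), Real.exp_pos _, fun n => ?_⟩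
    have := hs.neg.sum_le_tsum (range n) fun k _ => hlog k
    rw [tsum_neg, sum_neg_distrib, neg_le_neg_iff] at this
    rw [hprod]
    exact Real.exp_le_exp.2 this

theorem summable_log_iff_summable_one_sub {a : ℕ → ℝ} (ha0 : ∀ k, 0 < a k)
    (ha1 : ∀ k, a k ≤ 1) :
    (Summable fun k => Real.log (a k)) ↔ Summable fun k => 1 - a k := by
  refine ⟨fun hs => hs.neg.of_nonneg_of_le (fun k => sub_nonneg.2 (ha1 k)) fun k => ?_,
    fun hs => by simpa using Real.summable_log_one_add_of_summable hs.neg⟩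
  linarith [Real.log_le_sub_one_of_pos (ha0 k)]

theorem summable_iff_of_mul_le_of_le_mul {ι : Type*} {f g : ι → ℝ} {c C : ℝ} (hc : 0 < c)
    (hf : ∀ i, 0 ≤ f i) (hlow : ∀ i, c * f i ≤ g i) (hup : ∀ i, g i ≤ C * f i) :
    Summable f ↔ Summable g := by
  refine ⟨fun hs => (hs.mul_left C).of_nonneg_of_le (fun i => ?_) hup,
    fun hs => (hs.mul_left c⁻¹).of_nonneg_of_le hf fun i => ?_⟩
  · exact (mul_nonneg hc.le (hf i)).trans (hlow i)
  · rw [le_inv_mul_iff₀ hc]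
    exact hlow i

theorem sq_sub_eq_sq_sub_sqrt_mul_sq_add_sqrt {x y : ℝ} (hx : 0 ≤ x) (hy : 0 ≤ y) :
    (x - y) ^ 2 = (√x - √y) ^ 2 * (√x + √y) ^ 2 := by
  rw [← mul_pow]
  congr 1
  linear_combination Real.sq_sqrt hy - Real.sq_sqrt hx

theorem mul_sq_sub_sqrt_le_sq_sub {x y : ℝ} (hx : 0 ≤ x) (hy : 0 ≤ y) :
    x * (√x - √y) ^ 2 ≤ (x - y) ^ 2 := by
  rw [sq_sub_eq_sq_sub_sqrt_mul_sq_add_sqrt hx hy, mul_comm]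
  gcongr
  nlinarith [Real.sq_sqrt hx, Real.sqrt_nonneg x, Real.sqrt_nonneg y]

theorem sq_sub_le_four_mul_sq_sub_sqrt {x y : ℝ} (hx : 0 ≤ x) (hy : 0 ≤ y) (hx1 : x ≤ 1)
    (hy1 : y ≤ 1) : (x - y) ^ 2 ≤ 4 * (√x - √y) ^ 2 := by
  rw [sq_sub_eq_sq_sub_sqrt_mul_sq_add_sqrt hx hy, mul_comm]
  gcongr
  nlinarith [Real.sqrt_le_one.2 hx1, Real.sqrt_le_one.2 hy1, Real.sqrt_nonneg x,
    Real.sqrt_nonneg y]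

noncomputable def hellingerAffinity {ι : Type*} [Fintype ι] (p q : ι → ℝ) : ℝ :=
  ∑ i, √(p i * q i)

section HellingerAffinity

variable {ι : Type*} [Fintype ι] {p q : ι → ℝ}

theorem hellingerAffinity_pos (hp : ∀ i, 0 ≤ p i) (hq : ∀ i, 0 < q i) (hps : ∑ i, p i = 1) :
    0 < hellingerAffinity p q := by
  obtain ⟨i, -, hi⟩ := exists_ne_zero_of_sum_ne_zero (hps.trans_ne one_ne_zero)
  exact sum_pos' (fun j _ => Real.sqrt_nonneg _)
    ⟨i, mem_univ i, Real.sqrt_pos.2 (mul_pos ((hp i).lt_of_ne' hi) (hq i))⟩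

theorem sum_sq_sqrt_sub_sqrt_eq_two_mul_one_sub_hellingerAffinity
    (hp : ∀ i, 0 ≤ p i) (hq : ∀ i, 0 ≤ q i) (hps : ∑ i, p i = 1) (hqs : ∑ i, q i = 1) :
    ∑ i, (√(q i) - √(p i)) ^ 2 = 2 * (1 - hellingerAffinity p q) := by
  have h (i : ι) : (√(q i) - √(p i)) ^ 2 = q i + p i - 2 * √(p i * q i) := by
    rw [sub_sq, Real.sq_sqrt (hq i), Real.sq_sqrt (hp i), Real.sqrt_mul (hp i)]
    ring
  simp only [h, sum_sub_distrib, sum_add_distrib, hps, hqs, ← mul_sum, hellingerAffinity]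
  ring

theorem hellingerAffinity_le_one
    (hp : ∀ i, 0 ≤ p i) (hq : ∀ i, 0 ≤ q i) (hps : ∑ i, p i = 1) (hqs : ∑ i, q i = 1) :
    hellingerAffinity p q ≤ 1 := by
  have := sum_sq_sqrt_sub_sqrt_eq_two_mul_one_sub_hellingerAffinity hp hq hps hqs
  linarith [sum_nonneg fun i (_ : i ∈ univ) => sq_nonneg (√(q i) - √(p i))]

theorem mul_one_sub_hellingerAffinity_le_sum_sq_sub
    (hp : ∀ i, 0 ≤ p i) (hq : ∀ i, 0 ≤ q i) (hps : ∑ i, p i = 1) (hqs : ∑ i, q i = 1)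
    {c : ℝ} (hc : ∀ i, c ≤ q i) :
    2 * c * (1 - hellingerAffinity p q) ≤ ∑ i, (q i - p i) ^ 2 := by
  rw [mul_comm 2 c, mul_assoc,
    ← sum_sq_sqrt_sub_sqrt_eq_two_mul_one_sub_hellingerAffinity hp hq hps hqs, mul_sum]
  exact sum_le_sum fun i _ => (mul_le_mul_of_nonneg_right (hc i) (sq_nonneg _)).trans
    (mul_sq_sub_sqrt_le_sq_sub (hq i) (hp i))

theorem sum_sq_sub_le_mul_one_sub_hellingerAffinity
    (hp : ∀ i, 0 ≤ p i) (hq : ∀ i, 0 ≤ q i) (hps : ∑ i, p i = 1) (hqs : ∑ i, q i = 1) :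
    ∑ i, (q i - p i) ^ 2 ≤ 8 * (1 - hellingerAffinity p q) := by
  have hle_one {r : ι → ℝ} (hr : ∀ i, 0 ≤ r i) (hrs : ∑ i, r i = 1) (i : ι) : r i ≤ 1 :=
    hrs ▸ single_le_sum (fun j _ => hr j) (mem_univ i)
  rw [show (8 : ℝ) = 4 * 2 by norm_num, mul_assoc,
    ← sum_sq_sqrt_sub_sqrt_eq_two_mul_one_sub_hellingerAffinity hp hq hps hqs, mul_sum]
  exact sum_le_sum fun i _ =>
    sq_sub_le_four_mul_sq_sub_sqrt (hq i) (hp i) (hle_one hq hqs i) (hle_one hp hps i)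

end HellingerAffinity

/-- Remark 3: if the entries `q_{ik}` are uniformly bounded below by `q⁺ > 0`, then
positivity of the infinite product of Hellinger affinities
`∏_k ∑_i √(p_{ik} q_{ik})` is equivalent to
`∑_k ∑_i (1 - p_{ik}/q_{ik})² q_{ik}² < ∞` (i.e. `∑_k ∑_i (q_{ik} - p_{ik})² < ∞`). -/
theorem affinity_product_pos_iff_summable (N : ℕ → ℕ)
    (p q : (k : ℕ) → Fin (N k + 1) → ℝ)
    (hp : ∀ k i, 0 ≤ p k i) (hq : ∀ k i, 0 < q k i)
    (hps : ∀ k, ∑ i, p k i = 1) (hqs : ∀ k, ∑ i, q k i = 1)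
    (qplus : ℝ) (hqplus : 0 < qplus) (hbound : ∀ k i, qplus ≤ q k i) :
    (∃ c > 0, ∀ n, c ≤ ∏ k ∈ Finset.range n, ∑ i, Real.sqrt (p k i * q k i)) ↔
      Summable (fun k => ∑ i, (1 - p k i / q k i) ^ 2 * (q k i) ^ 2) := by
  have hterm (k : ℕ) : ∑ i, (1 - p k i / q k i) ^ 2 * q k i ^ 2 = ∑ i, (q k i - p k i) ^ 2 :=
    sum_congr rfl fun i _ => by field_simp [(hq k i).ne']
  have hq₀ (k : ℕ) (i : Fin (N k + 1)) : 0 ≤ q k i := (hq k i).le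
  have ha0 (k : ℕ) := hellingerAffinity_pos (hp k) (hq k) (hps k)
  have ha1 (k : ℕ) := hellingerAffinity_le_one (hp k) (hq₀ k) (hps k) (hqs k)
  change (∃ c > 0, ∀ n, c ≤ ∏ k ∈ range n, hellingerAffinity (p k) (q k)) ↔ _
  rw [exists_pos_le_prod_range_iff_summable_log ha0 ha1,
    summable_log_iff_summable_one_sub ha0 ha1]
  simp only [hterm]
  exact summable_iff_of_mul_le_of_le_mul (mul_pos two_pos hqplus) (fun k => sub_nonneg.2 (ha1 k))
    (fun k => mul_one_sub_hellingerAffinity_le_sum_sq_sub (hp k) (hq₀ k) (hps k) (hqs k)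
      (hbound k))
    (fun k => sum_sq_sub_le_mul_one_sub_hellingerAffinity (hp k) (hq₀ k) (hps k) (hqs k))
end

section
/- There exist probability vectors p_k, q_k on {0,1,2} with q_{ik} > 0, for which ∏_{k=1}^∞ ∑_{i=0}^2 √(p_{ik} q_{ik}) > 0 but ∑_{k=1}^∞ ∑_{i=0}^2 (1 - p_{ik}/q_{ik})² = ∞. Concretely, take q_{1k} = 2^{-k}, q_{0k} = q_{2k} = (1 - 2^{-k})/2, p_{1k} = 0, p_{0k} = p_{2k} = 1/2. -/
open MeasureTheory Filter Finset Topology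

lemma exp_neg_two_mul_le (t : ℝ) (h0 : 0 ≤ t) (h : t ≤ 1 / 2) :
    Real.exp (-(2 * t)) ≤ 1 - t := by
  have h1 : (1 : ℝ) + 2 * t ≤ Real.exp (2 * t) := by
    have := Real.add_one_le_exp (2 * t); linarith
  have hpos : (0 : ℝ) < 1 + 2 * t := by linarith
  have h2 : Real.exp (-(2 * t)) ≤ (1 + 2 * t)⁻¹ := by
    rw [Real.exp_neg]
    exact inv_anti₀ hpos h1
  have h3 : (1 + 2 * t)⁻¹ ≤ 1 - t := by
    rw [inv_le_iff_one_le_mul₀ hpos]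
    nlinarith
  linarith

/-- The example of Remark 3: for the probability vectors on `{0,1,2}` given by
`q_{1k} = 2^{-k}`, `q_{0k} = q_{2k} = (1 - 2^{-k})/2`, `p_{1k} = 0`,
`p_{0k} = p_{2k} = 1/2` (here `k = 1, 2, ...` is encoded as `k + 1`, `k : ℕ`),
the infinite product of Hellinger affinities `∏_k ∑_i √(p_{ik} q_{ik})` is positive,
while the series `∑_k ∑_i (1 - p_{ik}/q_{ik})²` diverges. -/
theorem affinity_pos_but_series_diverges (p q : ℕ → Fin 3 → ℝ)
    (hq0 : ∀ k, q k 0 = (1 - (1 / 2 : ℝ) ^ (k + 1)) / 2)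
    (hq1 : ∀ k, q k 1 = (1 / 2 : ℝ) ^ (k + 1))
    (hq2 : ∀ k, q k 2 = (1 - (1 / 2 : ℝ) ^ (k + 1)) / 2)
    (hp0 : ∀ k, p k 0 = (1 / 2 : ℝ)) (hp1 : ∀ k, p k 1 = 0)
    (hp2 : ∀ k, p k 2 = (1 / 2 : ℝ)) :
    (∃ c > 0, ∀ n, c ≤ ∏ k ∈ Finset.range n, ∑ i, Real.sqrt (p k i * q k i)) ∧
    ¬ Summable (fun k => ∑ i, (1 - p k i / q k i) ^ 2) := by
  constructor
  · refine ⟨Real.exp (-2), Real.exp_pos _, fun n => ?_⟩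
    have key : ∀ k : ℕ, Real.exp (-((1 / 2 : ℝ) ^ k)) ≤ ∑ i, Real.sqrt (p k i * q k i) := by
      intro k
      set t : ℝ := (1 / 2 : ℝ) ^ (k + 1) with ht
      have h0 : 0 ≤ t := by positivity
      have hhalf : t ≤ 1 / 2 := by
        calc t ≤ (1 / 2 : ℝ) ^ 1 :=
              pow_le_pow_of_le_one (by norm_num) (by norm_num) (by omega)
          _ = 1 / 2 := by norm_num
      have h1t : 0 ≤ 1 - t := by linarith
      have hsum : ∑ i, Real.sqrt (p k i * q k i) = Real.sqrt (1 - t) := by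
        rw [Fin.sum_univ_three, hp0, hp1, hp2, hq0, hq1, hq2, zero_mul, Real.sqrt_zero]
        have he : (1 / 2 : ℝ) * ((1 - t) / 2) = (1 - t) * (1 / 2) ^ 2 := by ring
        rw [← ht, he, Real.sqrt_mul h1t, Real.sqrt_sq (by norm_num : (0:ℝ) ≤ 1 / 2)]
        ring
      rw [hsum]
      have h2t : (2 : ℝ) * t = (1 / 2 : ℝ) ^ k := by rw [ht]; ring
      have hexp : Real.exp (-((1 / 2 : ℝ) ^ k)) ≤ 1 - t := by
        rw [← h2t]; exact exp_neg_two_mul_le t h0 hhalf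
      have hsq : 1 - t ≤ Real.sqrt (1 - t) := by
        rw [Real.le_sqrt h1t]
        · nlinarith
        · exact h1t
      linarith
    calc Real.exp (-2)
        ≤ Real.exp (-(∑ k ∈ Finset.range n, (1 / 2 : ℝ) ^ k)) := by
          apply Real.exp_le_exp.mpr
          have := sum_geometric_two_le n
          simp only [one_div] at this ⊢
          linarith
      _ = ∏ k ∈ Finset.range n, Real.exp (-((1 / 2 : ℝ) ^ k)) := by
          rw [← Real.exp_sum, Finset.sum_neg_distrib]
      _ ≤ ∏ k ∈ Finset.range n, ∑ i, Real.sqrt (p k i * q k i) :=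
          Finset.prod_le_prod (fun k _ => (Real.exp_pos _).le) (fun k _ => key k)
  · intro h
    have h2 : ∀ k, (1 : ℝ) ≤ ∑ i, (1 - p k i / q k i) ^ 2 := by
      intro k
      rw [Fin.sum_univ_three, hp1]
      have : (1 - 0 / q k 1) ^ 2 = 1 := by simp
      nlinarith [sq_nonneg (1 - p k 0 / q k 0), sq_nonneg (1 - p k 2 / q k 2)]
    have h1 := h.tendsto_atTop_zero
    have : (1 : ℝ) ≤ 0 := ge_of_tendsto' h1 h2
    linarith
end

section
/- Let ξ be the random variable with independent Q̃-symbols determined by matrices Q̃ and P̃. If the matrix P̃ has only finitely many columns containing a zero entry, then the topological support of μ_ξ is a finite union of nondegenerate closed intervals (μ_ξ is of pure S-type). -/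
/-!
Let `n` bound the columns of `P̃` that contain a zero. Digit sequences whose first `n` digits
all have positive probability form a set of full measure which is a finite union of cylinders,
and the coding map sends the cylinder of a prefix into its cylinder interval `Δ_{c₀…c_{n-1}}`;
so the support lies in the finite union of these nondegenerate intervals. Conversely, a point `x`
of such an interval lies in cylinder intervals of arbitrary depth that extend the prefix. Beyond
level `n` every digit has positive probability, so these deeper cylinders have positive measure,
and their intervals, of length at most `∏ max q`, shrink to `x`; hence every neighbourhood of `x`
has positive measure.
-/

open MeasureTheory Filter Finset Topology PiNat

/-- The topological support of a measure on `ℝ`: the set of points all of whose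
neighbourhoods have positive measure.  It is the smallest closed set of full
measure. -/
def msupport (μ : Measure ℝ) : Set ℝ :=
  {x : ℝ | ∀ ε > 0, μ (Set.Ioo (x - ε) (x + ε)) ≠ 0}

lemma msupport_subset_of_isClosed {ν : Measure ℝ} {F : Set ℝ} (hF : IsClosed F)
    (hν : ν Fᶜ = 0) : msupport ν ⊆ F := by
  intro x hx
  by_contra hxF
  obtain ⟨ε, hε, hball⟩ := Metric.isOpen_iff.1 hF.isOpen_compl x hxF
  exact hx ε hε (measure_mono_null (by rwa [← Real.ball_eq_Ioo]) hν)

lemma exists_fin_sUnion_eq_iUnion_Icc {𝓘 : Set (Set ℝ)} (h𝓘 : 𝓘.Finite)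
    (hI : ∀ I ∈ 𝓘, ∃ a b, a < b ∧ I = Set.Icc a b) :
    ∃ (m : ℕ) (a b : Fin m → ℝ), (∀ j, a j < b j) ∧ ⋃₀ 𝓘 = ⋃ j, Set.Icc (a j) (b j) := by
  have := h𝓘.to_subtype
  obtain ⟨m, ⟨e⟩⟩ := Finite.exists_equiv_fin 𝓘
  choose a b hab ha using fun I : 𝓘 => hI I I.2
  refine ⟨m, a ∘ e.symm, b ∘ e.symm, fun j => hab _, ?_⟩
  rw [Set.sUnion_eq_iUnion, ← e.symm.surjective.iUnion_comp]
  simp only [Function.comp_apply, ← ha]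

lemma measure_eq_zero_of_forall_cylinder {E : ℕ → Type*} [∀ n, TopologicalSpace (E n)]
    [∀ n, DiscreteTopology (E n)] [∀ n, SecondCountableTopology (E n)]
    [MeasurableSpace (∀ n, E n)] (μ : Measure (∀ n, E n)) {s : Set (∀ n, E n)}
    (h : ∀ ω ∈ s, ∃ n, μ (cylinder ω n) = 0) : μ s = 0 :=
  measure_null_of_locally_null s fun ω hω =>
    let ⟨n, hn⟩ := h ω hω
    ⟨cylinder ω n, mem_nhdsWithin_of_mem_nhds
      ((isOpen_cylinder E ω n).mem_nhds (self_mem_cylinder ω n)), hn⟩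

namespace QRepresentation

variable {N : ℕ → ℕ} (q : (k : ℕ) → Fin (N k + 1) → ℝ)

def digitOffset (k m : ℕ) : ℝ :=
  ∑ j : Fin (N k + 1), if (j : ℕ) < m then q k j else 0

def cylinderLength (n : ℕ) (ω : (k : ℕ) → Fin (N k + 1)) : ℝ :=
  ∏ k ∈ range n, q k (ω k)

def cylinderLeft (n : ℕ) (ω : (k : ℕ) → Fin (N k + 1)) : ℝ :=
  ∑ k ∈ range n, digitOffset q k (ω k) * cylinderLength q k ω

/-- The paper's cylinder interval `Δ_{ω₀…ω_{n-1}}`. -/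
def cylinderInterval (n : ℕ) (ω : (k : ℕ) → Fin (N k + 1)) : Set ℝ :=
  Set.Icc (cylinderLeft q n ω) (cylinderLeft q n ω + cylinderLength q n ω)

variable {q}

lemma digitOffset_zero (k : ℕ) : digitOffset q k 0 = 0 := by
  simp [digitOffset]

lemma digitOffset_succ (k m : ℕ) (hm : m < N k + 1) :
    digitOffset q k (m + 1) = digitOffset q k m + q k ⟨m, hm⟩ := by
  rw [show q k ⟨m, hm⟩ = ∑ j, if j = ⟨m, hm⟩ then q k j else 0 by simp, digitOffset,
    digitOffset, ← sum_add_distrib]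
  refine sum_congr rfl fun j _ => ?_
  split_ifs <;> simp_all [Fin.ext_iff] <;> omega

lemma digitOffset_last (hqs : ∀ k, ∑ i, q k i = 1) (k : ℕ) : digitOffset q k (N k + 1) = 1 := by
  rw [digitOffset, ← hqs k]
  exact sum_congr rfl fun j _ => if_pos j.isLt

lemma digitOffset_mono (hq : ∀ k i, 0 ≤ q k i) (k : ℕ) : Monotone (digitOffset q k) :=
  fun m m' hmm' => sum_le_sum fun j _ => by
    split_ifs <;> first | exact le_rfl | exact hq k j | omega

lemma digitOffset_nonneg (hq : ∀ k i, 0 ≤ q k i) (k m : ℕ) : 0 ≤ digitOffset q k m :=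
  sum_nonneg fun j _ => by split_ifs; exacts [hq k j, le_rfl]

lemma digitOffset_add_le_one (hq : ∀ k i, 0 ≤ q k i) (hqs : ∀ k, ∑ i, q k i = 1) (k : ℕ)
    (i : Fin (N k + 1)) : digitOffset q k i + q k i ≤ 1 := by
  rw [← digitOffset_succ k i i.isLt, ← digitOffset_last hqs k]
  exact digitOffset_mono hq k (by omega)

lemma exists_digitOffset_le_le (hqs : ∀ k, ∑ i, q k i = 1) (k : ℕ) {t : ℝ} (h0 : 0 ≤ t)
    (h1 : t ≤ 1) : ∃ i : Fin (N k + 1), digitOffset q k i ≤ t ∧ t ≤ digitOffset q k i + q k i := by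
  classical
  let P m := digitOffset q k m ≤ t
  set m := Nat.findGreatest P (N k)
  have hm : m < N k + 1 := Nat.lt_succ_of_le (Nat.findGreatest_le _)
  have hP0 : P 0 := by simpa [P, digitOffset_zero] using h0
  refine ⟨⟨m, hm⟩, Nat.findGreatest_spec (Nat.zero_le _) hP0, ?_⟩
  rw [← digitOffset_succ]
  rcases Nat.lt_succ_iff_lt_or_eq.1 hm with hlt | heq
  · exact (not_le.1 (Nat.findGreatest_is_greatest (P := P) (Nat.lt_succ_self m) hlt)).le
  · change t ≤ digitOffset q k (m + 1)
    rwa [heq, digitOffset_last hqs]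

lemma cylinderLength_nonneg (hq : ∀ k i, 0 ≤ q k i) (n : ℕ) (ω : (k : ℕ) → Fin (N k + 1)) :
    0 ≤ cylinderLength q n ω :=
  prod_nonneg fun k _ => hq k (ω k)

lemma cylinderLength_pos (hq : ∀ k i, 0 < q k i) (n : ℕ) (ω : (k : ℕ) → Fin (N k + 1)) :
    0 < cylinderLength q n ω :=
  prod_pos fun k _ => hq k (ω k)

lemma cylinderLength_succ (n : ℕ) (ω : (k : ℕ) → Fin (N k + 1)) :
    cylinderLength q (n + 1) ω = cylinderLength q n ω * q n (ω n) :=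
  prod_range_succ _ _

lemma cylinderLeft_succ (n : ℕ) (ω : (k : ℕ) → Fin (N k + 1)) :
    cylinderLeft q (n + 1) ω = cylinderLeft q n ω + digitOffset q n (ω n) * cylinderLength q n ω :=
  sum_range_succ _ _

lemma cylinderLength_le_prod_iSup (hq : ∀ k i, 0 ≤ q k i) (n : ℕ)
    (ω : (k : ℕ) → Fin (N k + 1)) : cylinderLength q n ω ≤ ∏ k ∈ range n, ⨆ i, q k i :=
  prod_le_prod (fun k _ => hq k (ω k))
    fun k _ => le_ciSup (Set.finite_range _).bddAbove (ω k)

section Congr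

variable {n : ℕ} {ω ρ : (k : ℕ) → Fin (N k + 1)}

lemma cylinderLength_congr (h : ρ ∈ cylinder ω n) : cylinderLength q n ρ = cylinderLength q n ω :=
  prod_congr rfl fun k hk => by rw [h k (mem_range.1 hk)]

lemma cylinderLeft_congr (h : ρ ∈ cylinder ω n) : cylinderLeft q n ρ = cylinderLeft q n ω :=
  sum_congr rfl fun k hk => by
    have hkn := mem_range.1 hk
    rw [h k hkn, cylinderLength_congr fun j hj => h j (hj.trans hkn)]

lemma cylinderInterval_congr (h : ρ ∈ cylinder ω n) :
    cylinderInterval q n ρ = cylinderInterval q n ω := by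
  rw [cylinderInterval, cylinderInterval, cylinderLeft_congr h, cylinderLength_congr h]

end Congr

variable (q) in
lemma finite_range_cylinderInterval (n : ℕ) : (Set.range (cylinderInterval q n)).Finite := by
  refine (Set.finite_range fun c : (k : Fin n) → Fin (N k + 1) =>
    cylinderInterval q n fun k => if h : k < n then c ⟨k, h⟩ else 0).subset ?_
  rintro _ ⟨ω, rfl⟩
  exact ⟨fun k => ω k, cylinderInterval_congr fun k hk => dif_pos hk⟩

lemma cylinderInterval_antitone (hq : ∀ k i, 0 ≤ q k i) (hqs : ∀ k, ∑ i, q k i = 1)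
    (ω : (k : ℕ) → Fin (N k + 1)) : Antitone fun n => cylinderInterval q n ω := by
  refine antitone_nat_of_succ_le fun n => Set.Icc_subset_Icc ?_ ?_
  · rw [cylinderLeft_succ]
    nlinarith [digitOffset_nonneg hq n (ω n), cylinderLength_nonneg hq n ω]
  · rw [cylinderLeft_succ, cylinderLength_succ]
    nlinarith [digitOffset_add_le_one hq hqs n (ω n), cylinderLength_nonneg hq n ω]

lemma cylinderLeft_le (hq : ∀ k i, 0 ≤ q k i) (hqs : ∀ k, ∑ i, q k i = 1)
    (ω : (k : ℕ) → Fin (N k + 1)) (m n : ℕ) :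
    cylinderLeft q m ω ≤ cylinderLeft q n ω + cylinderLength q n ω := by
  rcases le_total m n with hmn | hnm
  · have : cylinderLeft q m ω ≤ cylinderLeft q n ω :=
      sum_le_sum_of_subset_of_nonneg (range_subset_range.2 hmn) fun k _ _ =>
        mul_nonneg (digitOffset_nonneg hq k _) (cylinderLength_nonneg hq k ω)
    linarith [cylinderLength_nonneg hq n ω]
  · refine (cylinderInterval_antitone hq hqs ω hnm ⟨le_rfl, ?_⟩).2
    linarith [cylinderLength_nonneg hq m ω]

lemma digitOffset_mul_cylinderLength_nonneg (hq : ∀ k i, 0 ≤ q k i)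
    (ω : (k : ℕ) → Fin (N k + 1)) (k : ℕ) :
    0 ≤ digitOffset q k (ω k) * cylinderLength q k ω :=
  mul_nonneg (digitOffset_nonneg hq k _) (cylinderLength_nonneg hq k ω)

lemma hasSum_codingMap (hq : ∀ k i, 0 ≤ q k i) (hqs : ∀ k, ∑ i, q k i = 1)
    (ω : (k : ℕ) → Fin (N k + 1)) :
    HasSum (fun k => digitOffset q k (ω k) * cylinderLength q k ω) (codingMap N q ω) := by
  refine (summable_of_sum_range_le (c := 1) (digitOffset_mul_cylinderLength_nonneg hq ω)
    fun m => ?_).hasSum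
  simpa [cylinderLeft, cylinderLength] using cylinderLeft_le hq hqs ω m 0

lemma codingMap_mem_cylinderInterval (hq : ∀ k i, 0 ≤ q k i) (hqs : ∀ k, ∑ i, q k i = 1)
    (ω : (k : ℕ) → Fin (N k + 1)) (n : ℕ) : codingMap N q ω ∈ cylinderInterval q n ω :=
  ⟨sum_le_hasSum _ (fun k _ => digitOffset_mul_cylinderLength_nonneg hq ω k)
      (hasSum_codingMap hq hqs ω),
    Real.tsum_le_of_sum_range_le (digitOffset_mul_cylinderLength_nonneg hq ω)
      fun m => cylinderLeft_le hq hqs ω m n⟩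

lemma mapsTo_cylinder (hq : ∀ k i, 0 ≤ q k i) (hqs : ∀ k, ∑ i, q k i = 1) (n : ℕ)
    (ω : (k : ℕ) → Fin (N k + 1)) :
    Set.MapsTo (codingMap N q) (cylinder ω n) (cylinderInterval q n ω) := fun ρ hρ =>
  cylinderInterval_congr hρ ▸ codingMap_mem_cylinderInterval hq hqs ρ n

lemma exists_update_mem_cylinderInterval (hq : ∀ k i, 0 < q k i) (hqs : ∀ k, ∑ i, q k i = 1)
    {n : ℕ} {ω : (k : ℕ) → Fin (N k + 1)} {x : ℝ} (hx : x ∈ cylinderInterval q n ω) :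
    ∃ i, x ∈ cylinderInterval q (n + 1) (Function.update ω n i) := by
  have hL := cylinderLength_pos hq n ω
  obtain ⟨i, hi₀, hi₁⟩ := exists_digitOffset_le_le hqs n
    (div_nonneg (sub_nonneg.2 hx.1) hL.le) ((div_le_one hL).2 (sub_le_iff_le_add'.2 hx.2))
  rw [le_div_iff₀ hL] at hi₀
  rw [div_le_iff₀ hL] at hi₁
  have hpre := update_mem_cylinder ω n i
  refine ⟨i, ?_⟩
  rw [cylinderInterval, cylinderLeft_succ, cylinderLength_succ, cylinderLeft_congr hpre,
    cylinderLength_congr hpre, Function.update_self]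
  constructor <;> nlinarith

lemma exists_mem_cylinder_mem_cylinderInterval (hq : ∀ k i, 0 < q k i)
    (hqs : ∀ k, ∑ i, q k i = 1) {n m : ℕ} (hnm : n ≤ m) {ω : (k : ℕ) → Fin (N k + 1)} {x : ℝ}
    (hx : x ∈ cylinderInterval q n ω) : ∃ ρ ∈ cylinder ω n, x ∈ cylinderInterval q m ρ := by
  induction m, hnm using Nat.le_induction with
  | base => exact ⟨ω, fun _ _ => rfl, hx⟩
  | succ m hnm ih =>
    obtain ⟨ρ, hρ, hxρ⟩ := ih
    obtain ⟨i, hi⟩ := exists_update_mem_cylinderInterval hq hqs hxρ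
    exact ⟨_, mem_cylinder_iff_eq.1 hρ ▸ cylinder_anti ρ hnm (update_mem_cylinder ρ m i), hi⟩

variable (q) in
lemma measurable_cylinderLeft (n : ℕ) : Measurable (cylinderLeft q n) := by
  have hcoord (k : ℕ) (f : Fin (N k + 1) → ℝ) :
      Measurable fun ω : (k : ℕ) → Fin (N k + 1) => f (ω k) :=
    (measurable_of_countable f).comp (measurable_pi_apply k)
  exact Finset.measurable_sum _ fun k _ =>
    (hcoord k (digitOffset q k ·)).mul (Finset.measurable_prod (range k) fun s _ => hcoord s (q s))

lemma measurable_codingMap (hq : ∀ k i, 0 ≤ q k i) (hqs : ∀ k, ∑ i, q k i = 1) :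
    Measurable (codingMap N q) :=
  measurable_of_tendsto_metrizable (measurable_cylinderLeft q)
    (tendsto_pi_nhds.2 fun ω => (hasSum_codingMap hq hqs ω).tendsto_sum_nat)

variable {p : (k : ℕ) → Fin (N k + 1) → ℝ} {μ : Measure ((k : ℕ) → Fin (N k + 1))}

lemma msupport_map_codingMap_subset (hq : ∀ k i, 0 ≤ q k i) (hqs : ∀ k, ∑ i, q k i = 1)
    (hμ : ∀ n ω, μ (cylinder ω n) = ENNReal.ofReal (∏ k ∈ range n, p k (ω k))) (n : ℕ) :
    msupport (μ.map (codingMap N q)) ⊆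
      ⋃₀ (cylinderInterval q n '' {ω | ∀ k < n, p k (ω k) ≠ 0}) := by
  set good := {ω : (k : ℕ) → Fin (N k + 1) | ∀ k < n, p k (ω k) ≠ 0}
  have hclosed : IsClosed (⋃₀ (cylinderInterval q n '' good)) := by
    rw [Set.sUnion_eq_biUnion]
    exact ((finite_range_cylinderInterval q n).subset (Set.image_subset_range _ _)).isClosed_biUnion
      fun _ ⟨_, _, hI⟩ => hI ▸ isClosed_Icc
  refine msupport_subset_of_isClosed hclosed ?_
  rw [Measure.map_apply (measurable_codingMap hq hqs) hclosed.isOpen_compl.measurableSet]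
  refine measure_eq_zero_of_forall_cylinder μ fun ω hω => ⟨n, ?_⟩
  have hbad : ω ∉ good := fun hgood => hω <| Set.mem_sUnion_of_mem
    (codingMap_mem_cylinderInterval hq hqs ω n) (Set.mem_image_of_mem _ hgood)
  obtain ⟨k, hk, hpk⟩ : ∃ k < n, p k (ω k) = 0 := by simpa [good] using hbad
  rw [hμ, prod_eq_zero (mem_range.2 hk) hpk, ENNReal.ofReal_zero]

lemma sUnion_subset_msupport_map_codingMap (hq : ∀ k i, 0 < q k i)
    (hqs : ∀ k, ∑ i, q k i = 1)
    (hmax : Tendsto (fun n => ∏ k ∈ range n, ⨆ i, q k i) atTop (𝓝 0)) (hp : ∀ k i, 0 ≤ p k i)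
    (hμ : ∀ n ω, μ (cylinder ω n) = ENNReal.ofReal (∏ k ∈ range n, p k (ω k))) {n : ℕ}
    (hn : ∀ k ≥ n, ∀ i, p k i ≠ 0) :
    ⋃₀ (cylinderInterval q n '' {ω | ∀ k < n, p k (ω k) ≠ 0}) ⊆
      msupport (μ.map (codingMap N q)) := by
  rintro x ⟨_, ⟨ω, hω, rfl⟩, hx⟩ ε hε
  obtain ⟨m, hmε, hnm⟩ : ∃ m, ∏ k ∈ range m, ⨆ i, q k i < ε ∧ n ≤ m :=
    ((hmax.eventually (gt_mem_nhds hε)).and (eventually_ge_atTop n)).exists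
  obtain ⟨ρ, hρ, hxρ⟩ := exists_mem_cylinder_mem_cylinderInterval hq hqs hnm hx
  have hsub : cylinder ρ m ⊆ codingMap N q ⁻¹' Set.Ioo (x - ε) (x + ε) := fun ρ' hρ' => by
    have h := mapsTo_cylinder (fun k i => (hq k i).le) hqs m ρ hρ'
    have hL := cylinderLength_le_prod_iSup (fun k i => (hq k i).le) m ρ
    constructor <;> linarith [h.1, h.2, hxρ.1, hxρ.2]
  have hpos : 0 < μ (cylinder ρ m) := by
    rw [hμ, ENNReal.ofReal_pos]
    refine prod_pos fun k _ => (hp k (ρ k)).lt_of_ne' ?_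
    rcases lt_or_ge k n with hkn | hkn
    · rw [hρ k hkn]
      exact hω k hkn
    · exact hn k hkn _
  exact (hpos.trans_le ((measure_mono hsub).trans (Measure.le_map_apply
    (measurable_codingMap (fun k i => (hq k i).le) hqs).aemeasurable _))).ne'

end QRepresentation

open scoped Classical in
theorem support_S_type_general (N : ℕ → ℕ) (p q : (k : ℕ) → Fin (N k + 1) → ℝ)
    (μ : Measure ((k : ℕ) → Fin (N k + 1)))
    (hp : ∀ k i, 0 ≤ p k i) (hq : ∀ k i, 0 < q k i)
    (hqs : ∀ k, ∑ i, q k i = 1)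
    (hmax : Tendsto (fun n => ∏ k ∈ Finset.range n, ⨆ i, q k i) atTop (nhds 0))
    (hμ : ∀ (n : ℕ) (ω : (k : ℕ) → Fin (N k + 1)),
      μ {x | ∀ k < n, x k = ω k} = ENNReal.ofReal (∏ k ∈ Finset.range n, p k (ω k)))
    (μξ : Measure ℝ) (hμξ : μξ = Measure.map (codingMap N q) μ)
    (hfin : {k | ∃ i, p k i = 0}.Finite) :
    ∃ (m : ℕ) (a b : Fin m → ℝ), (∀ j, a j < b j) ∧
      msupport μξ = ⋃ j, Set.Icc (a j) (b j) := by
  subst hμξ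
  obtain ⟨n, hn⟩ : ∃ n, ∀ k ≥ n, ∀ i, p k i ≠ 0 := by
    obtain ⟨n, hn⟩ := hfin.bddAbove
    exact ⟨n + 1, fun k hk i hpi => by linarith [hn ⟨i, hpi⟩]⟩
  rw [(QRepresentation.msupport_map_codingMap_subset (fun k i => (hq k i).le) hqs hμ n).antisymm
    (QRepresentation.sUnion_subset_msupport_map_codingMap hq hqs hmax hp hμ hn)]
  exact exists_fin_sUnion_eq_iUnion_Icc
    ((QRepresentation.finite_range_cylinderInterval q n).subset (Set.image_subset_range _ _))
    fun _ ⟨ω, _, hI⟩ =>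
      ⟨_, _, lt_add_of_pos_right _ (QRepresentation.cylinderLength_pos hq n ω), hI.symm⟩

open scoped Classical in
/-- Theorem 3, case 1): if the matrix `P̃` has only finitely many columns containing
a zero entry, then the topological support of `μ_ξ` is a finite union of
nondegenerate closed intervals, i.e. `μ_ξ` is of pure S-type. -/
theorem support_S_type (N : ℕ → ℕ) (p q : (k : ℕ) → Fin (N k + 1) → ℝ)
    (μ : Measure ((k : ℕ) → Fin (N k + 1))) [IsProbabilityMeasure μ]
    (hp : ∀ k i, 0 ≤ p k i) (hq : ∀ k i, 0 < q k i)
    (hps : ∀ k, ∑ i, p k i = 1) (hqs : ∀ k, ∑ i, q k i = 1)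
    (hmax : Tendsto (fun n => ∏ k ∈ Finset.range n, ⨆ i, q k i) atTop (nhds 0))
    (hμ : ∀ (n : ℕ) (ω : (k : ℕ) → Fin (N k + 1)),
      μ {x | ∀ k < n, x k = ω k} = ENNReal.ofReal (∏ k ∈ Finset.range n, p k (ω k)))
    (μξ : Measure ℝ) (hμξ : μξ = Measure.map (codingMap N q) μ)
    (hfin : {k | ∃ i, p k i = 0}.Finite) :
    ∃ (m : ℕ) (a b : Fin m → ℝ), (∀ j, a j < b j) ∧
      msupport μξ = ⋃ j, Set.Icc (a j) (b j) :=
  support_S_type_general N p q μ hp hq hqs hmax hμ μξ hμξ hfin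
end

section
/- Let ξ be the random variable with independent Q̃-symbols. If P̃ has infinitely many columns with a zero entry and ∑_{k=1}^∞ ∑_{i: p_{ik}=0} q_{ik} = ∞, then the topological support of μ_ξ is a nowhere dense set of Lebesgue measure zero (μ_ξ is of pure C-type). -/
open MeasureTheory Filter Finset Topology

/-! Almost every digit sequence has only digits of positive probability, so `μ_ξ` is carried by
the closed set `⋂ₙ Aₙ`, where `Aₙ` is the union of the rank-`n` cylinder intervals with such
digits. Since the cylinder lengths are products of the `q_{ik}`, the total length of `Aₙ`
factorizes as `∏_{k<n} (1 - r_k) ≤ exp (-∑_{k<n} r_k)` with `r_k = ∑_{i : p_{ik} = 0} q_{ik}`,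
which tends to `0`. A closed Lebesgue-null set is nowhere dense, and it contains the support. -/

section CodingMap

variable {N : ℕ → ℕ} (q : (k : ℕ) → Fin (N k + 1) → ℝ)

noncomputable def codingTerm (ω : (k : ℕ) → Fin (N k + 1)) (k : ℕ) : ℝ :=
  (∑ j : Fin (N k + 1), if (j : ℕ) < (ω k : ℕ) then q k j else 0) *
    ∏ s ∈ Finset.range k, q s (ω s)

noncomputable def cylinderLength (ω : (k : ℕ) → Fin (N k + 1)) (n : ℕ) : ℝ :=
  ∏ s ∈ Finset.range n, q s (ω s)

/-- The paper's cylinder interval `Δ_{ω₀ … ω_{n-1}}`. -/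
noncomputable def cylinderInterval (ω : (k : ℕ) → Fin (N k + 1)) (n : ℕ) : Set ℝ :=
  Set.Icc (∑ k ∈ Finset.range n, codingTerm q ω k)
    (∑ k ∈ Finset.range n, codingTerm q ω k + cylinderLength q ω n)

theorem cylinderInterval_congr {ω ω' : (k : ℕ) → Fin (N k + 1)} {n : ℕ}
    (h : ∀ k < n, ω k = ω' k) : cylinderInterval q ω n = cylinderInterval q ω' n := by
  have hterm : ∀ k < n, codingTerm q ω k = codingTerm q ω' k := fun k hk => by
    unfold codingTerm
    rw [h k hk, Finset.prod_congr rfl fun s hs => by rw [h s ((mem_range.1 hs).trans hk)]]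
  have hlen : cylinderLength q ω n = cylinderLength q ω' n :=
    Finset.prod_congr rfl fun s hs => by rw [h s (mem_range.1 hs)]
  unfold cylinderInterval
  rw [Finset.sum_congr rfl fun k hk => hterm k (mem_range.1 hk), hlen]

theorem volume_cylinderInterval (ω : (k : ℕ) → Fin (N k + 1)) (n : ℕ) :
    volume (cylinderInterval q ω n) = ENNReal.ofReal (cylinderLength q ω n) := by
  rw [cylinderInterval, Real.volume_Icc, add_sub_cancel_left]

theorem measurable_codingTerm (k : ℕ) : Measurable fun ω => codingTerm q ω k :=
  ((measurable_of_countable fun i : Fin (N k + 1) =>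
      ∑ j : Fin (N k + 1), if (j : ℕ) < (i : ℕ) then q k j else 0).comp
    (measurable_pi_apply k)).mul
    (Finset.measurable_prod _ fun s _ => (measurable_of_countable (q s)).comp
      (measurable_pi_apply s))

variable {q} (hq : ∀ k i, 0 < q k i)
include hq

theorem codingTerm_nonneg (ω : (k : ℕ) → Fin (N k + 1)) (k : ℕ) : 0 ≤ codingTerm q ω k :=
  mul_nonneg (Finset.sum_nonneg fun j _ => by split_ifs <;> simp [(hq k j).le])
    (Finset.prod_nonneg fun s _ => (hq s (ω s)).le)

theorem cylinderLength_nonneg (ω : (k : ℕ) → Fin (N k + 1)) (n : ℕ) :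
    0 ≤ cylinderLength q ω n :=
  Finset.prod_nonneg fun s _ => (hq s (ω s)).le

variable (hqs : ∀ k, ∑ i, q k i = 1)
include hqs

/-- The digit `ω k` splits `Δ_{ω₀ … ω_{k-1}}` into the part to its left, of length
`codingTerm q ω k`, the subinterval `Δ_{ω₀ … ω_k}` and the part to its right. -/
theorem codingTerm_add_cylinderLength_succ_le (ω : (k : ℕ) → Fin (N k + 1)) (k : ℕ) :
    codingTerm q ω k + cylinderLength q ω (k + 1) ≤ cylinderLength q ω k := by
  have hleft : (∑ j : Fin (N k + 1), if (j : ℕ) < (ω k : ℕ) then q k j else 0) + q k (ω k)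
      ≤ 1 := by
    have hdiag : q k (ω k) = ∑ j, if j = ω k then q k j else 0 := by simp
    rw [← hqs k, hdiag, ← Finset.sum_add_distrib]
    refine Finset.sum_le_sum fun j _ => ?_
    split_ifs <;> simp_all [(hq k j).le]
  have hlen := cylinderLength_nonneg hq ω k
  rw [cylinderLength, Finset.prod_range_succ, codingTerm]
  change _ * cylinderLength q ω k + cylinderLength q ω k * _ ≤ cylinderLength q ω k
  nlinarith

theorem antitone_sum_codingTerm_add_cylinderLength (ω : (k : ℕ) → Fin (N k + 1)) :
    Antitone fun n => ∑ k ∈ Finset.range n, codingTerm q ω k + cylinderLength q ω n :=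
  antitone_nat_of_succ_le fun n => by
    rw [Finset.sum_range_succ, add_assoc]
    exact add_le_add_right (codingTerm_add_cylinderLength_succ_le hq hqs ω n) _

theorem sum_codingTerm_le (ω : (k : ℕ) → Fin (N k + 1)) {m n : ℕ} (hnm : n ≤ m) :
    ∑ k ∈ Finset.range m, codingTerm q ω k ≤
      ∑ k ∈ Finset.range n, codingTerm q ω k + cylinderLength q ω n :=
  (le_add_of_nonneg_right (cylinderLength_nonneg hq ω m)).trans
    (antitone_sum_codingTerm_add_cylinderLength hq hqs ω hnm)

theorem hasSum_codingTerm (ω : (k : ℕ) → Fin (N k + 1)) :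
    HasSum (codingTerm q ω) (codingMap N q ω) := by
  refine (summable_of_sum_range_le (c := 1) (codingTerm_nonneg hq ω) fun m => ?_).hasSum
  simpa [cylinderLength] using sum_codingTerm_le hq hqs ω (Nat.zero_le m)

theorem codingMap_mem_cylinderInterval (ω : (k : ℕ) → Fin (N k + 1)) (n : ℕ) :
    codingMap N q ω ∈ cylinderInterval q ω n := by
  have hs := hasSum_codingTerm hq hqs ω
  exact ⟨hs.summable.sum_le_tsum _ fun k _ => codingTerm_nonneg hq ω k,
    le_of_tendsto hs.tendsto_sum_nat
      (eventually_atTop.2 ⟨n, fun m hm => sum_codingTerm_le hq hqs ω hm⟩)⟩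

theorem measurable_codingMap : Measurable (codingMap N q) :=
  measurable_of_tendsto_metrizable
    (fun _ => Finset.measurable_sum _ fun k _ => measurable_codingTerm q k)
    (tendsto_pi_nhds.2 fun ω => (hasSum_codingTerm hq hqs ω).tendsto_sum_nat)

end CodingMap

def extendDigits {N : ℕ → ℕ} {n : ℕ} (f : (k : Fin n) → Fin (N k + 1)) (k : ℕ) :
    Fin (N k + 1) :=
  if h : k < n then f ⟨k, h⟩ else 0

theorem extendDigits_restrict {N : ℕ → ℕ} {n : ℕ} (ω : (k : ℕ) → Fin (N k + 1)) {k : ℕ}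
    (hk : k < n) : extendDigits (fun j : Fin n => ω j) k = ω k :=
  dif_pos hk

theorem cylinderLength_extendDigits {N : ℕ → ℕ} (q : (k : ℕ) → Fin (N k + 1) → ℝ) {n : ℕ}
    (f : (k : Fin n) → Fin (N k + 1)) :
    cylinderLength q (extendDigits f) n = ∏ k : Fin n, q k (f k) := by
  rw [cylinderLength, ← Fin.prod_univ_eq_prod_range (fun k => q k (extendDigits f k))]
  exact Finset.prod_congr rfl fun k _ => by rw [extendDigits, dif_pos k.isLt]

section Cover

variable {N : ℕ → ℕ} (p q : (k : ℕ) → Fin (N k + 1) → ℝ)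

noncomputable def admissibleCover (n : ℕ) : Set ℝ :=
  ⋃ f ∈ Fintype.piFinset (fun k : Fin n => {i | p k i ≠ 0}),
    cylinderInterval q (extendDigits f) n

theorem isClosed_admissibleCover (n : ℕ) : IsClosed (admissibleCover p q n) :=
  Set.Finite.isClosed_biUnion (Finset.finite_toSet _) fun _ _ => isClosed_Icc

variable {p q} (hq : ∀ k i, 0 < q k i) (hqs : ∀ k, ∑ i, q k i = 1)
include hq hqs

theorem codingMap_mem_admissibleCover {ω : (k : ℕ) → Fin (N k + 1)}
    (hω : ∀ k, p k (ω k) ≠ 0) (n : ℕ) : codingMap N q ω ∈ admissibleCover p q n := by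
  refine Set.mem_biUnion (x := fun k : Fin n => ω k) ?_ ?_
  · simpa [Fintype.mem_piFinset] using fun k : Fin n => hω k
  · rw [cylinderInterval_congr q fun k hk => extendDigits_restrict ω hk]
    exact codingMap_mem_cylinderInterval hq hqs ω n

theorem volume_admissibleCover_le (n : ℕ) :
    volume (admissibleCover p q n) ≤
      ENNReal.ofReal (∏ k ∈ Finset.range n, (1 - ∑ i, if p k i = 0 then q k i else 0)) := by
  have hfactor (k : ℕ) :
      ∑ i ∈ {i | p k i ≠ 0}, q k i = 1 - ∑ i, if p k i = 0 then q k i else 0 := by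
    rw [← hqs k, Finset.sum_filter, eq_sub_iff_add_eq, ← Finset.sum_add_distrib]
    exact Finset.sum_congr rfl fun i _ => by split_ifs <;> simp_all
  calc volume (admissibleCover p q n)
      ≤ ∑ f ∈ Fintype.piFinset (fun k : Fin n => {i | p k i ≠ 0}),
          volume (cylinderInterval q (extendDigits f) n) := measure_biUnion_finset_le _ _
    _ = ENNReal.ofReal (∑ f ∈ Fintype.piFinset (fun k : Fin n => {i | p k i ≠ 0}),
          ∏ k : Fin n, q k (f k)) := by
        simp only [volume_cylinderInterval, cylinderLength_extendDigits]
        exact (ENNReal.ofReal_sum_of_nonneg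
          (f := fun f : (k : Fin n) → Fin (N k + 1) => ∏ k : Fin n, q k (f k))
          fun f _ => Finset.prod_nonneg fun k _ => (hq k (f k)).le).symm
    _ = _ := by
        rw [← Finset.prod_univ_sum,
          Fin.prod_univ_eq_prod_range (fun k => ∑ i ∈ {i | p k i ≠ 0}, q k i)]
        simp only [hfactor]

end Cover

theorem tendsto_prod_one_sub_of_tendsto_sum {r : ℕ → ℝ} (hr : ∀ k, r k ≤ 1)
    (hsum : Tendsto (fun n => ∑ k ∈ Finset.range n, r k) atTop atTop) :
    Tendsto (fun n => ∏ k ∈ Finset.range n, (1 - r k)) atTop (𝓝 0) := by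
  refine squeeze_zero (fun n => Finset.prod_nonneg fun k _ => sub_nonneg.2 (hr k)) (fun n => ?_)
    (Real.tendsto_exp_atBot.comp (tendsto_neg_atTop_atBot.comp hsum))
  calc ∏ k ∈ Finset.range n, (1 - r k)
      ≤ ∏ k ∈ Finset.range n, Real.exp (-r k) :=
        Finset.prod_le_prod (fun k _ => sub_nonneg.2 (hr k))
          fun k _ => by linarith [Real.add_one_le_exp (-r k)]
    _ = Real.exp (-∑ k ∈ Finset.range n, r k) := by
        rw [← Real.exp_sum, Finset.sum_neg_distrib]

theorem volume_iInter_admissibleCover {N : ℕ → ℕ} {p q : (k : ℕ) → Fin (N k + 1) → ℝ}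
    (hq : ∀ k i, 0 < q k i) (hqs : ∀ k, ∑ i, q k i = 1)
    (hdiv : Tendsto (fun n => ∑ k ∈ Finset.range n, ∑ i, if p k i = 0 then q k i else 0)
      atTop atTop) :
    volume (⋂ n, admissibleCover p q n) = 0 := by
  have hr : ∀ k, (∑ i, if p k i = 0 then q k i else 0) ≤ 1 := fun k =>
    hqs k ▸ Finset.sum_le_sum fun i _ => by split_ifs <;> simp [(hq k i).le]
  have hlim := ENNReal.tendsto_ofReal (tendsto_prod_one_sub_of_tendsto_sum hr hdiv)
  rw [ENNReal.ofReal_zero] at hlim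
  exact le_antisymm (ge_of_tendsto' hlim fun n =>
    (measure_mono (Set.iInter_subset _ n)).trans (volume_admissibleCover_le hq hqs n)) bot_le

/-- A cylinder of rank `k + 1` whose last digit has probability zero is `μ`-null. -/
theorem ae_digit_ne_zero {N : ℕ → ℕ} {p : (k : ℕ) → Fin (N k + 1) → ℝ}
    {μ : Measure ((k : ℕ) → Fin (N k + 1))}
    (hμ : ∀ (n : ℕ) (ω : (k : ℕ) → Fin (N k + 1)),
      μ {x | ∀ k < n, x k = ω k} = ENNReal.ofReal (∏ k ∈ Finset.range n, p k (ω k)))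
    (k : ℕ) : ∀ᵐ ω ∂μ, p k (ω k) ≠ 0 := by
  have hcover : {ω : (k : ℕ) → Fin (N k + 1) | ¬p k (ω k) ≠ 0} ⊆
      ⋃ g : (j : Fin (k + 1)) → Fin (N j + 1), ⋃ _ : p k (extendDigits g k) = 0,
        {x | ∀ j < k + 1, x j = extendDigits g j} := by
    intro ω hω
    have hrestrict := fun j (hj : j < k + 1) => extendDigits_restrict ω hj
    refine Set.mem_iUnion₂.2 ⟨fun j => ω j, ?_, fun j hj => (hrestrict j hj).symm⟩
    rw [hrestrict k k.lt_succ_self]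
    exact not_not.1 hω
  refine ae_iff.2 (measure_mono_null hcover (measure_iUnion_null fun g =>
    measure_iUnion_null fun hg => ?_))
  rw [hμ, Finset.prod_eq_zero (Finset.self_mem_range_succ k) hg, ENNReal.ofReal_zero]

theorem msupport_subset_of_isClosed_s15 {μ : Measure ℝ} {A : Set ℝ} (hA : IsClosed A)
    (hμA : μ Aᶜ = 0) : msupport μ ⊆ A := by
  intro x hx
  by_contra hxA
  obtain ⟨ε, hε, hball⟩ := Metric.isOpen_iff.1 hA.isOpen_compl x hxA
  exact hx ε hε (measure_mono_null (Real.ball_eq_Ioo x ε ▸ hball) hμA)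

open scoped Classical in
theorem support_C_type_general (N : ℕ → ℕ) (p q : (k : ℕ) → Fin (N k + 1) → ℝ)
    (μ : Measure ((k : ℕ) → Fin (N k + 1)))
    (hq : ∀ k i, 0 < q k i) (hqs : ∀ k, ∑ i, q k i = 1)
    (hμ : ∀ (n : ℕ) (ω : (k : ℕ) → Fin (N k + 1)),
      μ {x | ∀ k < n, x k = ω k} = ENNReal.ofReal (∏ k ∈ Finset.range n, p k (ω k)))
    (μξ : Measure ℝ) (hμξ : μξ = Measure.map (codingMap N q) μ)
    (hdiv : Tendsto
      (fun n => ∑ k ∈ Finset.range n, ∑ i, if p k i = 0 then q k i else 0)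
      atTop atTop) :
    IsNowhereDense (msupport μξ) ∧ volume (msupport μξ) = 0 := by
  set A := ⋂ n, admissibleCover p q n
  have hA : IsClosed A := isClosed_iInter (isClosed_admissibleCover p q)
  have hvol : volume A = 0 := volume_iInter_admissibleCover hq hqs hdiv
  have hsupp : msupport μξ ⊆ A := by
    refine msupport_subset_of_isClosed_s15 hA ?_
    rw [hμξ, Measure.map_apply (measurable_codingMap hq hqs) hA.isOpen_compl.measurableSet]
    have hdigits : ∀ᵐ ω ∂μ, ∀ k, p k (ω k) ≠ 0 := ae_all_iff.2 (ae_digit_ne_zero hμ)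
    exact measure_mono_null (fun ω hω hS => hω (Set.mem_iInter.2
      (codingMap_mem_admissibleCover hq hqs hS))) (ae_iff.1 hdigits)
  exact ⟨(IsNowhereDense.of_isClosed_null hA hvol).mono hsupp, measure_mono_null hsupp hvol⟩

open scoped Classical in
/-- Theorem 3, case 2): if the matrix `P̃` has infinitely many columns with a zero
entry, and `∑_k ∑_{i : p_{ik} = 0} q_{ik} = ∞`, then the topological support of
`μ_ξ` is a nowhere dense set of Lebesgue measure zero, i.e. `μ_ξ` is of pure
C-type. -/
theorem support_C_type (N : ℕ → ℕ) (p q : (k : ℕ) → Fin (N k + 1) → ℝ)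
    (μ : Measure ((k : ℕ) → Fin (N k + 1))) [IsProbabilityMeasure μ]
    (hp : ∀ k i, 0 ≤ p k i) (hq : ∀ k i, 0 < q k i)
    (hps : ∀ k, ∑ i, p k i = 1) (hqs : ∀ k, ∑ i, q k i = 1)
    (hmax : Tendsto (fun n => ∏ k ∈ Finset.range n, ⨆ i, q k i) atTop (nhds 0))
    (hμ : ∀ (n : ℕ) (ω : (k : ℕ) → Fin (N k + 1)),
      μ {x | ∀ k < n, x k = ω k} = ENNReal.ofReal (∏ k ∈ Finset.range n, p k (ω k)))
    (μξ : Measure ℝ) (hμξ : μξ = Measure.map (codingMap N q) μ)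
    (hinf : {k | ∃ i, p k i = 0}.Infinite)
    (hdiv : Tendsto
      (fun n => ∑ k ∈ Finset.range n, ∑ i, if p k i = 0 then q k i else 0)
      atTop atTop) :
    IsNowhereDense (msupport μξ) ∧ volume (msupport μξ) = 0 :=
  support_C_type_general N p q μ hq hqs hμ μξ hμξ hdiv
end
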